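/- arXiv:1904.08227 — 9 statements merged into one kernel-verified Lean document; each statement's English description precedes it below -/
import Mathlib

section
/- Let q, T, m, H2 be real numbers with m ≥ 0, H2 > 0 and q + 1 − T + m ≥ 0. Let r and k be positive integers, let n_1,…,n_k and a_1,…,a_k be positive integers with ∑_{i=1}^k n_i·a_i = r·H2, and let π_1,…,π_k and N_1,…,N_k be real numbers such that for every i one has 2·(π_i − 1)·H2 ≤ a_i² and N_i ≤ (q + 1 − T) + m·π_i. Then ∑_{i=1}^k N_i ≤ r·H2·(q + 1 − T + m) + m·r²·H2/2. -/
/-- Arithmetic core of Theorem 2.4: the number of zero coordinates of a codeword is at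
most `rH²(q+1-T+m) + mr²H²/2`. -/
theorem stmt_1 (q T m H2 : ℝ) (hm : 0 ≤ m) (hH2 : 0 < H2) (hpos : 0 ≤ q + 1 - T + m)
    (r k : ℕ) (hr : 0 < r) (hk : 0 < k)
    (n a : Fin k → ℕ) (hn : ∀ i, 0 < n i) (ha : ∀ i, 0 < a i)
    (hsum : ∑ i, (n i : ℝ) * (a i : ℝ) = (r : ℝ) * H2)
    (π N : Fin k → ℝ)
    (hπ : ∀ i, 2 * (π i - 1) * H2 ≤ (a i : ℝ) ^ 2)
    (hN : ∀ i, N i ≤ (q + 1 - T) + m * π i) :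
    ∑ i, N i ≤ (r : ℝ) * H2 * (q + 1 - T + m) + m * (r : ℝ) ^ 2 * H2 / 2 := by
  have hna : ∀ i : Fin k, (1 : ℝ) ≤ (n i : ℝ) * (a i : ℝ) := by
    intro i
    have h1 : (1 : ℝ) ≤ (n i : ℝ) := by exact_mod_cast hn i
    have h2 : (1 : ℝ) ≤ (a i : ℝ) := by exact_mod_cast ha i
    nlinarith
  -- each a i ≤ r H2
  have haS : ∀ i : Fin k, (a i : ℝ) ≤ (r : ℝ) * H2 := by
    intro i
    rw [← hsum]
    have h1 : (1 : ℝ) ≤ (n i : ℝ) := by exact_mod_cast hn i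
    have h2 : (0 : ℝ) < (a i : ℝ) := by exact_mod_cast ha i
    calc (a i : ℝ) ≤ (n i : ℝ) * (a i : ℝ) := by nlinarith
      _ ≤ ∑ j, (n j : ℝ) * (a j : ℝ) :=
        Finset.single_le_sum (f := fun j => (n j : ℝ) * (a j : ℝ))
          (fun j _ => by positivity) (Finset.mem_univ i)
  -- k ≤ r H2
  have hkS : (k : ℝ) ≤ (r : ℝ) * H2 := by
    rw [← hsum]
    calc (k : ℝ) = ∑ _i : Fin k, (1 : ℝ) := by simp
      _ ≤ ∑ i, (n i : ℝ) * (a i : ℝ) := Finset.sum_le_sum (fun i _ => hna i)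
  -- sum of squares bound
  have hsq : ∑ i, ((a i : ℝ)) ^ 2 ≤ ((r : ℝ) * H2) ^ 2 := by
    have : ∑ i, ((a i : ℝ)) ^ 2 ≤ ∑ i, (n i : ℝ) * (a i : ℝ) * ((r : ℝ) * H2) := by
      refine Finset.sum_le_sum (fun i _ => ?_)
      have h1 : (1 : ℝ) ≤ (n i : ℝ) := by exact_mod_cast hn i
      have h2 : (0 : ℝ) < (a i : ℝ) := by exact_mod_cast ha i
      have hr2 : (0 : ℝ) < (r : ℝ) * H2 := lt_of_lt_of_le h2 (haS i)
      nlinarith [mul_nonneg (mul_nonneg (sub_nonneg.2 h1) h2.le) hr2.le,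
        mul_nonneg (sub_nonneg.2 (haS i)) h2.le]
    rw [← Finset.sum_mul, hsum] at this
    nlinarith [this]
  -- pointwise bound
  have hpt : ∀ i : Fin k, N i ≤ (q + 1 - T + m) + m * (a i : ℝ) ^ 2 / (2 * H2) := by
    intro i
    have h1 := mul_le_mul_of_nonneg_left (hπ i) hm
    have h2 : m * (π i - 1) ≤ m * (a i : ℝ) ^ 2 / (2 * H2) := by
      rw [le_div_iff₀ (by positivity)]
      nlinarith [h1]
    have := hN i
    linarith
  calc ∑ i, N i ≤ ∑ i, ((q + 1 - T + m) + m * (a i : ℝ) ^ 2 / (2 * H2)) :=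
        Finset.sum_le_sum (fun i _ => hpt i)
    _ = (k : ℝ) * (q + 1 - T + m) + (∑ i, m * (a i : ℝ) ^ 2) / (2 * H2) := by
        rw [Finset.sum_add_distrib, ← Finset.sum_div]
        simp only [Finset.sum_const, Finset.card_univ, Fintype.card_fin, nsmul_eq_mul]
    _ ≤ (r : ℝ) * H2 * (q + 1 - T + m) + m * (r : ℝ) ^ 2 * H2 / 2 := by
        have h3 : (∑ i, m * (a i : ℝ) ^ 2) = m * ∑ i, ((a i : ℝ)) ^ 2 := by
          rw [Finset.mul_sum]
        rw [h3]
        have h4 : m * (∑ i, ((a i : ℝ)) ^ 2) ≤ m * ((r : ℝ) * H2) ^ 2 :=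
          mul_le_mul_of_nonneg_left hsq hm
        have h5 : m * ((r : ℝ) * H2) ^ 2 / (2 * H2) = m * (r : ℝ) ^ 2 * H2 / 2 := by
          field_simp
        have h6 : m * (∑ i, ((a i : ℝ)) ^ 2) / (2 * H2) ≤ m * ((r : ℝ) * H2) ^ 2 / (2 * H2) :=
          div_le_div_of_nonneg_right h4 (by positivity)
        have h7 := mul_le_mul_of_nonneg_right hkS hpos
        linarith [h6, h5 ▸ h6]
end

section
/- Let ℓ ≥ 1 and H2 > 0 be real numbers, let r be a positive integer, and let k1, k2 be nonnegative integers with k := k1 + k2 ≥ 1. Let n_1,…,n_k be positive integers, a_1,…,a_k positive real numbers with ∑_{i=1}^k n_i·a_i = r·H2, and π_1,…,π_k real numbers such that 2·(π_i − 1)·H2 ≤ a_i² for all i, π_i ≥ ℓ + 1 for 1 ≤ i ≤ k1, and π_i ≥ 2 for k1 < i ≤ k. Then k1·√ℓ + k2 ≤ r·√(H2/2). -/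
/-!
Each component contributes `n_i a_i ≥ a_i ≥ √(2(π_i - 1)H²)`, which is at least `√ℓ · √(2H²)` for
the `k1` components of genus `> ℓ` and at least `√(2H²)` for the others. Summing gives
`(k1 √ℓ + k2) √(2H²) ≤ r H² = r √(H²/2) √(2H²)`.
-/

open Finset

lemma sqrt_le_natCast_mul {c a : ℝ} {n : ℕ} (hn : 0 < n) (ha : 0 ≤ a) (h : c ≤ a ^ 2) :
    √c ≤ n * a :=
  calc √c ≤ √(a ^ 2) := Real.sqrt_le_sqrt h
    _ = a := Real.sqrt_sq ha
    _ ≤ n * a := le_mul_of_one_le_left ha (mod_cast hn)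

lemma sqrt_mul_sqrt_two_mul_le_natCast_mul {m π H a : ℝ} {n : ℕ} (hH : 0 < H) (hn : 0 < n)
    (ha : 0 ≤ a) (hπ : 2 * (π - 1) * H ≤ a ^ 2) (hm : m ≤ π - 1) :
    √m * √(2 * H) ≤ n * a := by
  rw [← Real.sqrt_mul' m (by positivity)]
  refine sqrt_le_natCast_mul hn ha ?_
  nlinarith

lemma sqrt_half_mul_sqrt_two_mul {H : ℝ} (hH : 0 ≤ H) : √(H / 2) * √(2 * H) = H := by
  rw [← Real.sqrt_mul (by positivity), show H / 2 * (2 * H) = H ^ 2 by ring, Real.sqrt_sq hH]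

theorem stmt_3_general (ℓ H2 : ℝ) (hH2 : 0 < H2)
    (r : ℕ) (k1 k2 : ℕ)
    (n : ℕ → ℕ) (a : ℕ → ℝ)
    (hn : ∀ i, i < k1 + k2 → 0 < n i) (ha : ∀ i, i < k1 + k2 → 0 < a i)
    (hsum : ∑ i ∈ Finset.range (k1 + k2), (n i : ℝ) * a i = (r : ℝ) * H2)
    (π : ℕ → ℝ)
    (hπ : ∀ i, i < k1 + k2 → 2 * (π i - 1) * H2 ≤ a i ^ 2)
    (hπ1 : ∀ i, i < k1 → ℓ + 1 ≤ π i)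
    (hπ2 : ∀ i, k1 ≤ i → i < k1 + k2 → 2 ≤ π i) :
    (k1 : ℝ) * Real.sqrt ℓ + (k2 : ℝ) ≤ (r : ℝ) * Real.sqrt (H2 / 2) := by
  have bound {i : ℕ} {m : ℝ} (hi : i < k1 + k2) (hm : m ≤ π i - 1) :
      √m * √(2 * H2) ≤ n i * a i :=
    sqrt_mul_sqrt_two_mul_le_natCast_mul hH2 (hn i hi) (ha i hi).le (hπ i hi) hm
  have hsplit : ((k1 : ℝ) * √ℓ + k2) * √(2 * H2) ≤ r * H2 := by
    rw [← hsum, sum_range_add, add_mul]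
    gcongr
    · simpa [mul_assoc] using sum_le_sum fun i (hi : i ∈ range k1) ↦
        have hi : i < k1 := mem_range.mp hi
        bound (by omega) (m := ℓ) (by linarith [hπ1 i hi])
    · simpa using sum_le_sum fun j (hj : j ∈ range k2) ↦
        have hj : j < k2 := mem_range.mp hj
        bound (by omega) (m := 1) (by linarith [hπ2 (k1 + j) (by omega) (by omega)])
  rw [← mul_le_mul_iff_of_pos_right (Real.sqrt_pos.mpr (by positivity : 0 < 2 * H2)), mul_assoc,
    sqrt_half_mul_sqrt_two_mul hH2.le]
  exact hsplit

/-- Arithmetic core of part (1) of Lemma 3.2: `k1·√ℓ + k2 ≤ r·√(H²/2)`. -/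
theorem stmt_3 (ℓ H2 : ℝ) (hℓ : 1 ≤ ℓ) (hH2 : 0 < H2)
    (r : ℕ) (hr : 0 < r) (k1 k2 : ℕ) (hk : 1 ≤ k1 + k2)
    (n : ℕ → ℕ) (a : ℕ → ℝ)
    (hn : ∀ i, i < k1 + k2 → 0 < n i) (ha : ∀ i, i < k1 + k2 → 0 < a i)
    (hsum : ∑ i ∈ Finset.range (k1 + k2), (n i : ℝ) * a i = (r : ℝ) * H2)
    (π : ℕ → ℝ)
    (hπ : ∀ i, i < k1 + k2 → 2 * (π i - 1) * H2 ≤ a i ^ 2)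
    (hπ1 : ∀ i, i < k1 → ℓ + 1 ≤ π i)
    (hπ2 : ∀ i, k1 ≤ i → i < k1 + k2 → 2 ≤ π i) :
    (k1 : ℝ) * Real.sqrt ℓ + (k2 : ℝ) ≤ (r : ℝ) * Real.sqrt (H2 / 2) :=
  stmt_3_general ℓ H2 hH2 r k1 k2 n a hn ha hsum π hπ hπ1 hπ2
end

section
/- Let ℓ ≥ 1 and H2 > 0 be real numbers, let r be a positive integer, and let k1, k2 be nonnegative integers with k := k1 + k2 ≥ 1. Let n_1,…,n_k be positive integers, a_1,…,a_k positive real numbers with ∑_{i=1}^k n_i·a_i = r·H2, and π_1,…,π_k real numbers such that 2·(π_i − 1)·H2 ≤ a_i² for all i, π_i ≥ ℓ + 1 for 1 ≤ i ≤ k1, and π_i ≥ 2 for k1 < i ≤ k. Then, setting α := r·√(H2/2) − k1·√ℓ − k2, one has ∑_{i=1}^{k1} π_i ≤ α² + 2·√ℓ·α + (ℓ + 1)·k1 (where the empty sum is 0 when k1 = 0). -/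
/-- Arithmetic core of part (2) of Lemma 3.2:
`∑_{i<k1} π_i ≤ α² + 2√ℓ·α + (ℓ+1)·k1` with `α = r√(H²/2) − k1√ℓ − k2`. -/
theorem stmt_4 (ℓ H2 : ℝ) (hℓ : 1 ≤ ℓ) (hH2 : 0 < H2)
    (r : ℕ) (hr : 0 < r) (k1 k2 : ℕ) (hk : 1 ≤ k1 + k2)
    (n : ℕ → ℕ) (a : ℕ → ℝ)
    (hn : ∀ i, i < k1 + k2 → 0 < n i) (ha : ∀ i, i < k1 + k2 → 0 < a i)
    (hsum : ∑ i ∈ Finset.range (k1 + k2), (n i : ℝ) * a i = (r : ℝ) * H2)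
    (π : ℕ → ℝ)
    (hπ : ∀ i, i < k1 + k2 → 2 * (π i - 1) * H2 ≤ a i ^ 2)
    (hπ1 : ∀ i, i < k1 → ℓ + 1 ≤ π i)
    (hπ2 : ∀ i, k1 ≤ i → i < k1 + k2 → 2 ≤ π i)
    (α : ℝ)
    (hα : α = (r : ℝ) * Real.sqrt (H2 / 2) - (k1 : ℝ) * Real.sqrt ℓ - (k2 : ℝ)) :
    ∑ i ∈ Finset.range k1, π i ≤ α ^ 2 + 2 * Real.sqrt ℓ * α + (ℓ + 1) * (k1 : ℝ) := by
  have h2H2 : (0:ℝ) < 2 * H2 := by linarith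
  set b : ℕ → ℝ := fun i => a i / Real.sqrt (2 * H2) with hb
  have hs : (0:ℝ) < Real.sqrt (2 * H2) := Real.sqrt_pos.mpr h2H2
  have hsq : Real.sqrt (2 * H2) ^ 2 = 2 * H2 := Real.sq_sqrt h2H2.le
  have hbpos : ∀ i, i < k1 + k2 → 0 < b i := fun i hi => div_pos (ha i hi) hs
  have hℓ0 : (0:ℝ) ≤ ℓ := by linarith
  have hsℓ : (0:ℝ) ≤ Real.sqrt ℓ := Real.sqrt_nonneg ℓ
  -- π i ≤ 1 + b i ^ 2
  have hπb : ∀ i, i < k1 + k2 → π i ≤ 1 + b i ^ 2 := by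
    intro i hi
    have h1 := hπ i hi
    have hb2 : b i ^ 2 = a i ^ 2 / (2 * H2) := by
      simp only [hb, div_pow, hsq]
    have h2 : π i - 1 ≤ a i ^ 2 / (2 * H2) := by
      rw [le_div_iff₀ h2H2]; nlinarith
    linarith [hb2 ▸ h2]
  -- total sum of b bounded
  have hsumb : ∑ i ∈ Finset.range (k1 + k2), b i ≤ (r : ℝ) * Real.sqrt (H2 / 2) := by
    have key : Real.sqrt (H2 / 2) * Real.sqrt (2 * H2) = H2 := by
      rw [← Real.sqrt_mul (by positivity)]
      rw [show H2 / 2 * (2 * H2) = H2 ^ 2 by ring, Real.sqrt_sq hH2.le]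
    have hsa : ∑ i ∈ Finset.range (k1 + k2), a i ≤ (r : ℝ) * H2 := by
      rw [← hsum]
      apply Finset.sum_le_sum
      intro i hi
      have hi' := Finset.mem_range.mp hi
      have : (1:ℝ) ≤ (n i : ℝ) := by exact_mod_cast hn i hi'
      nlinarith [ha i hi']
    have : ∑ i ∈ Finset.range (k1 + k2), b i
        = (∑ i ∈ Finset.range (k1 + k2), a i) / Real.sqrt (2 * H2) := by
      simp [hb, Finset.sum_div]
    rw [this, div_le_iff₀ hs]
    calc ∑ i ∈ Finset.range (k1 + k2), a i ≤ (r : ℝ) * H2 := hsa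
      _ = (r : ℝ) * Real.sqrt (H2 / 2) * Real.sqrt (2 * H2) := by rw [mul_assoc, key]
  -- lower bounds on b
  have hbl1 : ∀ i, i < k1 → Real.sqrt ℓ ≤ b i := by
    intro i hi
    have hi' : i < k1 + k2 := lt_of_lt_of_le hi (Nat.le_add_right _ _)
    have h1 : ℓ ≤ b i ^ 2 := by linarith [hπ1 i hi, hπb i hi']
    calc Real.sqrt ℓ ≤ Real.sqrt (b i ^ 2) := Real.sqrt_le_sqrt h1
      _ = b i := Real.sqrt_sq (hbpos i hi').le
  have hbl2 : ∀ i, k1 ≤ i → i < k1 + k2 → (1:ℝ) ≤ b i := by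
    intro i h1 h2
    have h3 : (1:ℝ) ≤ b i ^ 2 := by linarith [hπ2 i h1 h2, hπb i h2]
    nlinarith [hbpos i h2]
  -- S = sum of shifted values
  set S : ℝ := ∑ i ∈ Finset.range k1, (b i - Real.sqrt ℓ) with hS
  have hβ : ∀ i ∈ Finset.range k1, 0 ≤ b i - Real.sqrt ℓ := by
    intro i hi; linarith [hbl1 i (Finset.mem_range.mp hi)]
  have hS0 : 0 ≤ S := Finset.sum_nonneg hβ
  have hSdef : S = (∑ i ∈ Finset.range k1, b i) - (k1 : ℝ) * Real.sqrt ℓ := by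
    simp [hS, Finset.sum_sub_distrib, mul_comm]
  have hsplit : ∑ i ∈ Finset.range (k1 + k2), b i
      = (∑ i ∈ Finset.range k1, b i) + ∑ i ∈ Finset.range k2, b (k1 + i) := by
    rw [Finset.sum_range_add]
  have htail : (k2 : ℝ) ≤ ∑ i ∈ Finset.range k2, b (k1 + i) := by
    calc (k2 : ℝ) = ∑ _i ∈ Finset.range k2, (1:ℝ) := by simp
      _ ≤ _ := Finset.sum_le_sum (fun i hi => hbl2 (k1 + i) (Nat.le_add_right _ _)
          (by have := Finset.mem_range.mp hi; omega))
  have hSα : S ≤ α := by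
    rw [hSdef, hα]
    have : (∑ i ∈ Finset.range k1, b i) + (k2 : ℝ) ≤ (r : ℝ) * Real.sqrt (H2 / 2) := by
      calc (∑ i ∈ Finset.range k1, b i) + (k2 : ℝ)
          ≤ ∑ i ∈ Finset.range (k1 + k2), b i := by rw [hsplit]; linarith
        _ ≤ _ := hsumb
    linarith
  -- termwise bound
  have hterm : ∀ i ∈ Finset.range k1,
      π i ≤ 1 + ℓ + (b i - Real.sqrt ℓ) ^ 2 + 2 * Real.sqrt ℓ * (b i - Real.sqrt ℓ) := by
    intro i hi
    have hi1 := Finset.mem_range.mp hi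
    have hi' : i < k1 + k2 := lt_of_lt_of_le hi1 (Nat.le_add_right _ _)
    have h1 := hπb i hi'
    have h2 : Real.sqrt ℓ ^ 2 = ℓ := Real.sq_sqrt hℓ0
    nlinarith
  have hsq' : ∑ i ∈ Finset.range k1, (b i - Real.sqrt ℓ) ^ 2 ≤ S ^ 2 := by
    calc ∑ i ∈ Finset.range k1, (b i - Real.sqrt ℓ) ^ 2
        ≤ ∑ i ∈ Finset.range k1, (b i - Real.sqrt ℓ) * S := by
          apply Finset.sum_le_sum
          intro i hi
          have h1 : b i - Real.sqrt ℓ ≤ S := Finset.single_le_sum hβ hi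
          nlinarith [hβ i hi]
      _ = S * S := by rw [← Finset.sum_mul]
      _ = S ^ 2 := by ring
  calc ∑ i ∈ Finset.range k1, π i
      ≤ ∑ i ∈ Finset.range k1,
          (1 + ℓ + (b i - Real.sqrt ℓ) ^ 2 + 2 * Real.sqrt ℓ * (b i - Real.sqrt ℓ)) :=
        Finset.sum_le_sum hterm
    _ = (∑ _i ∈ Finset.range k1, (1 + ℓ))
          + (∑ i ∈ Finset.range k1, (b i - Real.sqrt ℓ) ^ 2)
          + ∑ i ∈ Finset.range k1, 2 * Real.sqrt ℓ * (b i - Real.sqrt ℓ) := by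
        rw [← Finset.sum_add_distrib, ← Finset.sum_add_distrib]
    _ = (1 + ℓ) * (k1 : ℝ) + (∑ i ∈ Finset.range k1, (b i - Real.sqrt ℓ) ^ 2)
          + 2 * Real.sqrt ℓ * S := by
        rw [Finset.sum_const, Finset.card_range, nsmul_eq_mul, ← Finset.mul_sum, hS]
        ring
    _ ≤ (1 + ℓ) * (k1 : ℝ) + S ^ 2 + 2 * Real.sqrt ℓ * S := by linarith
    _ ≤ α ^ 2 + 2 * Real.sqrt ℓ * α + (ℓ + 1) * (k1 : ℝ) := by nlinarith
end

section
/- Let q, T, m, ℓ, H2 be real numbers with m ≥ 0, ℓ ≥ 1 and H2 > 0. Let r be a positive integer, and let k1 ≥ 1 and k2 ≥ 0 be integers with k := k1 + k2. Let n_1,…,n_k be positive integers, a_1,…,a_k positive real numbers with ∑_{i=1}^k n_i·a_i = r·H2, and π_1,…,π_k, N_1,…,N_k real numbers such that: 2·(π_i − 1)·H2 ≤ a_i² for all i; π_i ≥ ℓ + 1 and N_i ≤ (q + 1 − T − 2m) + m·π_i for 1 ≤ i ≤ k1; and 2 ≤ π_i ≤ ℓ and N_i ≤ π_i − 1 for k1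 < i ≤ k. Then, setting α := r·√(H2/2) − k1·√ℓ − k2, one has ∑_{i=1}^{k} N_i ≤ k1·(q + 1 − T + (ℓ − 1)·(m − √ℓ)) + m·α² + 2·m·√ℓ·α + r·√(H2/2)·(ℓ − 1) − α·(ℓ − 1). -/
set_option maxHeartbeats 1000000


/-- Arithmetic core of inequality (9) in the proof of Theorem 3.3. -/
theorem stmt_5 (q T m ℓ H2 : ℝ) (hm : 0 ≤ m) (hℓ : 1 ≤ ℓ) (hH2 : 0 < H2)
    (r : ℕ) (hr : 0 < r) (k1 k2 : ℕ) (hk1 : 1 ≤ k1)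
    (n : ℕ → ℕ) (a : ℕ → ℝ)
    (hn : ∀ i, i < k1 + k2 → 0 < n i) (ha : ∀ i, i < k1 + k2 → 0 < a i)
    (hsum : ∑ i ∈ Finset.range (k1 + k2), (n i : ℝ) * a i = (r : ℝ) * H2)
    (π N : ℕ → ℝ)
    (hπ : ∀ i, i < k1 + k2 → 2 * (π i - 1) * H2 ≤ a i ^ 2)
    (h1 : ∀ i, i < k1 → ℓ + 1 ≤ π i ∧ N i ≤ (q + 1 - T - 2 * m) + m * π i)
    (h2 : ∀ i, k1 ≤ i → i < k1 + k2 → (2 ≤ π i ∧ π i ≤ ℓ) ∧ N i ≤ π i - 1)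
    (α : ℝ)
    (hα : α = (r : ℝ) * Real.sqrt (H2 / 2) - (k1 : ℝ) * Real.sqrt ℓ - (k2 : ℝ)) :
    ∑ i ∈ Finset.range (k1 + k2), N i ≤
      (k1 : ℝ) * (q + 1 - T + (ℓ - 1) * (m - Real.sqrt ℓ))
        + m * α ^ 2 + 2 * m * Real.sqrt ℓ * α
        + (r : ℝ) * Real.sqrt (H2 / 2) * (ℓ - 1) - α * (ℓ - 1) := by
  set K := k1 + k2 with hK
  have h2H2 : (0:ℝ) < 2 * H2 := by linarith
  set s := Real.sqrt (2 * H2) with hs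
  have hs_pos : 0 < s := Real.sqrt_pos.mpr h2H2
  have hs_sq : s ^ 2 = 2 * H2 := Real.sq_sqrt h2H2.le
  set B := (r : ℝ) * Real.sqrt (H2 / 2) with hBdef
  have hsL : Real.sqrt ℓ ^ 2 = ℓ := Real.sq_sqrt (by linarith)
  have hsL0 : 0 ≤ Real.sqrt ℓ := Real.sqrt_nonneg ℓ
  set b : ℕ → ℝ := fun i => a i / s with hb
  have hb_pos : ∀ i, i < K → 0 < b i := fun i hi => div_pos (ha i hi) hs_pos
  have hb2 : ∀ i, i < K → π i - 1 ≤ b i ^ 2 := by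
    intro i hi
    have h := hπ i hi
    have : b i ^ 2 = a i ^ 2 / (2 * H2) := by
      simp only [hb, div_pow, hs_sq]
    rw [this, le_div_iff₀ h2H2]
    linarith
  -- sum of b is at most B
  have hHs : H2 / s = Real.sqrt (H2 / 2) := by
    rw [div_eq_iff hs_pos.ne', hs, ← Real.sqrt_mul (by positivity)]
    rw [show H2 / 2 * (2 * H2) = H2 ^ 2 by ring, Real.sqrt_sq hH2.le]
  have hsumb : ∑ i ∈ Finset.range K, b i ≤ B := by
    have h1' : ∑ i ∈ Finset.range K, a i ≤ (r : ℝ) * H2 := by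
      rw [← hsum]
      refine Finset.sum_le_sum fun i hi => ?_
      have hi' := Finset.mem_range.mp hi
      have hn1 : (1:ℝ) ≤ (n i : ℝ) := by exact_mod_cast hn i hi'
      nlinarith [ha i hi']
    have : ∑ i ∈ Finset.range K, b i = (∑ i ∈ Finset.range K, a i) / s := by
      rw [Finset.sum_div]
    rw [this, div_le_iff₀ hs_pos]
    calc ∑ i ∈ Finset.range K, a i ≤ (r : ℝ) * H2 := h1'
      _ = (r : ℝ) * (H2 / s) * s := by field_simp
      _ = B * s := by rw [hHs]
  -- split sums
  have hsplit : ∀ f : ℕ → ℝ, ∑ i ∈ Finset.range K, f i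
      = ∑ i ∈ Finset.range k1, f i + ∑ i ∈ Finset.Ico k1 K, f i := by
    intro f
    rw [Finset.range_eq_Ico, ← Finset.sum_Ico_consecutive f (Nat.zero_le k1)
      (Nat.le_add_right k1 k2), ← Finset.range_eq_Ico]
  -- b_i ≥ √ℓ on first block
  have hbL : ∀ i, i < k1 → Real.sqrt ℓ ≤ b i := by
    intro i hi
    have hiK : i < K := lt_of_lt_of_le hi (Nat.le_add_right k1 k2)
    have hπi := (h1 i hi).1
    have hb2i := hb2 i hiK
    nlinarith [hb_pos i hiK]
  -- b_i ≥ 1 on second block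
  have hb1 : ∀ i, k1 ≤ i → i < K → (1:ℝ) ≤ b i := by
    intro i hle hi
    have hπi := ((h2 i hle hi).1).1
    have hb2i := hb2 i hi
    nlinarith [hb_pos i hi]
  set C := ∑ i ∈ Finset.range k1, (b i - Real.sqrt ℓ) with hCdef
  have hC0 : 0 ≤ C := Finset.sum_nonneg fun i hi => by
    have := hbL i (Finset.mem_range.mp hi); linarith
  have hIco : (k2 : ℝ) ≤ ∑ i ∈ Finset.Ico k1 K, b i := by
    calc (k2 : ℝ) = ∑ i ∈ Finset.Ico k1 K, (1:ℝ) := by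
          simp [hK]
      _ ≤ ∑ i ∈ Finset.Ico k1 K, b i := Finset.sum_le_sum fun i hi => by
          have h := Finset.mem_Ico.mp hi
          exact hb1 i h.1 h.2
  have hCα : C ≤ α := by
    have hsb := hsumb
    rw [hsplit b] at hsb
    have : C = ∑ i ∈ Finset.range k1, b i - (k1 : ℝ) * Real.sqrt ℓ := by
      rw [hCdef, Finset.sum_sub_distrib, Finset.sum_const, Finset.card_range,
        nsmul_eq_mul]
    rw [this, hα]
    linarith
  have hCsq : ∑ i ∈ Finset.range k1, (b i - Real.sqrt ℓ) ^ 2 ≤ C ^ 2 :=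
    Finset.sum_sq_le_sq_sum_of_nonneg fun i hi => by
      have := hbL i (Finset.mem_range.mp hi); linarith
  -- bound first block
  have hfirst : ∑ i ∈ Finset.range k1, N i ≤
      (k1 : ℝ) * (q + 1 - T - m + m * ℓ)
        + m * (∑ i ∈ Finset.range k1, (b i - Real.sqrt ℓ) ^ 2)
        + 2 * m * Real.sqrt ℓ * C := by
    have hpt : ∀ i ∈ Finset.range k1, N i ≤
        (q + 1 - T - m + m * ℓ) + m * (b i - Real.sqrt ℓ) ^ 2
          + 2 * m * Real.sqrt ℓ * (b i - Real.sqrt ℓ) := by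
      intro i hi
      have hi' := Finset.mem_range.mp hi
      have hiK : i < K := lt_of_lt_of_le hi' (Nat.le_add_right k1 k2)
      have hN := (h1 i hi').2
      have hb2i := hb2 i hiK
      -- π i ≤ 1 + b i ^2 = 1 + ((b i - √ℓ) + √ℓ)^2
      nlinarith [hb2i, hm]
    calc ∑ i ∈ Finset.range k1, N i
        ≤ ∑ i ∈ Finset.range k1, ((q + 1 - T - m + m * ℓ)
            + m * (b i - Real.sqrt ℓ) ^ 2
            + 2 * m * Real.sqrt ℓ * (b i - Real.sqrt ℓ)) :=
          Finset.sum_le_sum hpt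
      _ = (k1 : ℝ) * (q + 1 - T - m + m * ℓ)
            + m * (∑ i ∈ Finset.range k1, (b i - Real.sqrt ℓ) ^ 2)
            + 2 * m * Real.sqrt ℓ * C := by
          rw [hCdef, Finset.sum_add_distrib, Finset.sum_add_distrib,
            Finset.sum_const, Finset.card_range, nsmul_eq_mul,
            ← Finset.mul_sum, ← Finset.mul_sum]
  -- bound second block
  have hsecond : ∑ i ∈ Finset.Ico k1 K, N i ≤ (k2 : ℝ) * (ℓ - 1) := by
    calc ∑ i ∈ Finset.Ico k1 K, N i ≤ ∑ i ∈ Finset.Ico k1 K, (ℓ - 1) := by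
          refine Finset.sum_le_sum fun i hi => ?_
          have h := Finset.mem_Ico.mp hi
          have := h2 i h.1 h.2
          linarith [this.1.2, this.2]
      _ = (k2 : ℝ) * (ℓ - 1) := by
          rw [Finset.sum_const, nsmul_eq_mul]
          simp [hK]
  -- combine
  rw [hsplit N]
  have hmono : m * C ^ 2 + 2 * m * Real.sqrt ℓ * C
      ≤ m * α ^ 2 + 2 * m * Real.sqrt ℓ * α := by
    have hsq : C ^ 2 ≤ α ^ 2 := pow_le_pow_left₀ hC0 hCα 2
    have h1' := mul_le_mul_of_nonneg_left hsq hm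
    have h2' := mul_le_mul_of_nonneg_left hCα
      (show (0:ℝ) ≤ 2 * m * Real.sqrt ℓ by positivity)
    linarith [h1', h2']
  have hBα : B = α + (k1 : ℝ) * Real.sqrt ℓ + (k2 : ℝ) := by rw [hα]; ring
  have hmsum : m * (∑ i ∈ Finset.range k1, (b i - Real.sqrt ℓ) ^ 2) ≤ m * C ^ 2 :=
    mul_le_mul_of_nonneg_left hCsq hm
  have key : (k1 : ℝ) * (q + 1 - T + (ℓ - 1) * (m - Real.sqrt ℓ))
        + m * α ^ 2 + 2 * m * Real.sqrt ℓ * α + B * (ℓ - 1) - α * (ℓ - 1)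
      = (k1 : ℝ) * (q + 1 - T - m + m * ℓ)
        + m * α ^ 2 + 2 * m * Real.sqrt ℓ * α + (k2 : ℝ) * (ℓ - 1) := by
    rw [hBα]; ring
  linarith [hfirst, hsecond, hmsum, hmono, key]
end

section
/- Let m ≥ 0, ℓ ≥ 1, c and h > 0 be real numbers, and define φ(x) := m·(h − x·√ℓ)² + 2·m·√ℓ·(h − x·√ℓ) + x·c + h·(ℓ − 1). Let k1, k2 be nonnegative integers with k1 + k2 ≥ 1 and √ℓ·k1 + k2 ≤ h, and set α := h − k1·√ℓ − k2. Then: (a) if k1 = 0, one has k2·(ℓ − 1) ≤ ⌊h⌋·(ℓ − 1); and (b) if k1 ≥ 1, one has k1·c + m·α² + 2·m·√ℓ·α + h·(ℓ − 1) ≤ max(φ(1), φ(⌊h/√ℓ⌋)). -/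
lemma quad_max_aux (A B C a b x : ℝ) (hA : 0 ≤ A) (h1 : a ≤ x) (h2 : x ≤ b) :
    A * x ^ 2 + B * x + C ≤ max (A * a ^ 2 + B * a + C) (A * b ^ 2 + B * b + C) := by
  rcases le_total (A * a ^ 2 + B * a + C) (A * b ^ 2 + B * b + C) with hab | hab
  · rw [max_eq_right hab]
    rcases eq_or_lt_of_le (h1.trans h2) with h | h
    · subst h; rw [le_antisymm h2 h1]
    · nlinarith [mul_nonneg (mul_nonneg hA (sub_nonneg.2 h2)) (sub_nonneg.2 h1),
        mul_nonneg (sub_nonneg.2 h2) (sub_nonneg.2 h1)]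
  · rw [max_eq_left hab]
    rcases eq_or_lt_of_le (h1.trans h2) with h | h
    · subst h; rw [le_antisymm h2 h1]
    · nlinarith [mul_nonneg (mul_nonneg hA (sub_nonneg.2 h2)) (sub_nonneg.2 h1),
        mul_nonneg (sub_nonneg.2 h2) (sub_nonneg.2 h1)]

/-- Optimization step in the proof of Theorem 3.3: maximization of `Φ(k1,k2)` over the
integer points of the polygon `K`. -/
theorem stmt_6 (m ℓ c h : ℝ) (hm : 0 ≤ m) (hℓ : 1 ≤ ℓ) (hh : 0 < h)
    (φ : ℝ → ℝ)
    (hφ : ∀ x, φ x =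
      m * (h - x * Real.sqrt ℓ) ^ 2 + 2 * m * Real.sqrt ℓ * (h - x * Real.sqrt ℓ)
        + x * c + h * (ℓ - 1))
    (k1 k2 : ℕ) (hk : 1 ≤ k1 + k2)
    (hK : Real.sqrt ℓ * (k1 : ℝ) + (k2 : ℝ) ≤ h)
    (α : ℝ) (hα : α = h - (k1 : ℝ) * Real.sqrt ℓ - (k2 : ℝ)) :
    (k1 = 0 → (k2 : ℝ) * (ℓ - 1) ≤ (⌊h⌋ : ℝ) * (ℓ - 1)) ∧
    (1 ≤ k1 →
      (k1 : ℝ) * c + m * α ^ 2 + 2 * m * Real.sqrt ℓ * α + h * (ℓ - 1) ≤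
        max (φ 1) (φ ((⌊h / Real.sqrt ℓ⌋ : ℤ) : ℝ))) := by
  have hℓ0 : (0 : ℝ) ≤ ℓ := by linarith
  set s := Real.sqrt ℓ with hsdef
  have hs2 : s ^ 2 = ℓ := Real.sq_sqrt hℓ0
  have hs1 : 1 ≤ s := by
    rw [hsdef, show (1:ℝ) = Real.sqrt 1 by simp]
    exact Real.sqrt_le_sqrt hℓ
  have hs0 : 0 < s := by linarith
  constructor
  · intro h0
    subst h0
    have hk2h : (k2 : ℝ) ≤ h := by simpa using hK
    have : (k2 : ℤ) ≤ ⌊h⌋ := by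
      rw [Int.le_floor]; exact_mod_cast hk2h
    have hk2f : (k2 : ℝ) ≤ (⌊h⌋ : ℝ) := by exact_mod_cast this
    have : (0:ℝ) ≤ ℓ - 1 := by linarith
    exact mul_le_mul_of_nonneg_right hk2f this
  · intro h1
    have hk1 : (1 : ℝ) ≤ (k1 : ℝ) := by exact_mod_cast h1
    have hα0 : 0 ≤ α := by rw [hα]; linarith [hK]
    have hβ : α ≤ h - (k1 : ℝ) * s := by
      rw [hα]; have : (0:ℝ) ≤ (k2:ℝ) := Nat.cast_nonneg _
      linarith
    -- step 1: LHS ≤ φ k1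
    have step1 : (k1 : ℝ) * c + m * α ^ 2 + 2 * m * s * α + h * (ℓ - 1) ≤ φ (k1 : ℝ) := by
      rw [hφ]
      nlinarith [mul_nonneg hm (mul_nonneg (sub_nonneg.2 hβ) hα0),
        mul_nonneg hm (sub_nonneg.2 hβ), hs0.le]
    -- quadratic form of φ
    have hquad : ∀ x : ℝ, φ x = (m * ℓ) * x ^ 2 + (c - 2 * m * h * s - 2 * m * ℓ) * x
        + (m * h ^ 2 + 2 * m * s * h + h * (ℓ - 1)) := by
      intro x
      rw [hφ, ← hs2]; ring
    -- k1 ≤ ⌊h/s⌋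
    have hk1b : (k1 : ℝ) ≤ ((⌊h / s⌋ : ℤ) : ℝ) := by
      have : (k1 : ℝ) ≤ h / s := by
        rw [le_div_iff₀ hs0]; nlinarith [hK, Nat.cast_nonneg (α := ℝ) k2]
      have : (k1 : ℤ) ≤ ⌊h / s⌋ := by rw [Int.le_floor]; exact_mod_cast this
      exact_mod_cast this
    have step2 : φ (k1 : ℝ) ≤ max (φ 1) (φ ((⌊h / s⌋ : ℤ) : ℝ)) := by
      rw [hquad (k1 : ℝ), hquad 1, hquad ((⌊h / s⌋ : ℤ) : ℝ)]
      exact quad_max_aux _ _ _ _ _ _ (mul_nonneg hm hℓ0) hk1 hk1b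
    exact step1.trans step2
end

section
/- Let q, T, m, ℓ, H2 be real numbers with m ≥ 0, ℓ ≥ 1 and H2 > 0, let r be a positive integer, and let k1, k2 be nonnegative integers with k := k1 + k2 ≥ 1. Let n_1,…,n_k be positive integers, a_1,…,a_k positive real numbers with ∑_{i=1}^k n_i·a_i = r·H2, and π_1,…,π_k, N_1,…,N_k real numbers such that: 2·(π_i − 1)·H2 ≤ a_i² for all i; π_i ≥ ℓ + 1 and N_i ≤ (q + 1 − T − 2m) + m·π_i for 1 ≤ i ≤ k1; and 2 ≤ π_i ≤ ℓ and N_i ≤ π_i − 1 for k1 < i ≤ k. Set h := r·√(H2/2) and φ(x) := m·(h − x·√ℓ)² + 2·m·√ℓ·(h − x·√ℓ) + x·(q + 1 − T + (ℓ − 1)·(m − √ℓ)) + h·(ℓ − 1). Then ∑_{i=1}^{k} N_i ≤ max(⌊h⌋·(ℓ − 1), φ(1), φ(⌊h/√ℓ⌋)). -/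
private lemma sum_sq_le' (s : Finset ℕ) (f : ℕ → ℝ) (hf : ∀ i ∈ s, 0 ≤ f i) :
    ∑ i ∈ s, f i ^ 2 ≤ (∑ i ∈ s, f i) ^ 2 := by
  induction s using Finset.cons_induction with
  | empty => simp
  | cons a s ha ih =>
    rw [Finset.sum_cons, Finset.sum_cons]
    have h1 : 0 ≤ f a := hf a (Finset.mem_cons_self a s)
    have h2 : 0 ≤ ∑ i ∈ s, f i := Finset.sum_nonneg fun i hi => hf i (Finset.mem_cons_of_mem hi)
    have h3 := ih fun i hi => hf i (Finset.mem_cons_of_mem hi)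
    nlinarith [mul_nonneg h1 h2]

private lemma quad_le_max' (A B p x r : ℝ) (hA : 0 ≤ A) (hpx : p ≤ x) (hxr : x ≤ r) :
    A * x ^ 2 + B * x ≤ max (A * p ^ 2 + B * p) (A * r ^ 2 + B * r) := by
  rcases le_total (A * (x + p) + B) 0 with hc | hc
  · refine le_max_of_le_left ?_
    nlinarith [mul_nonneg (sub_nonneg.mpr hpx) (neg_nonneg.mpr hc)]
  · refine le_max_of_le_right ?_
    nlinarith [mul_nonneg (sub_nonneg.mpr hxr) hc,
      mul_nonneg (mul_nonneg hA (sub_nonneg.mpr hxr)) (sub_nonneg.mpr (hpx.trans hxr))]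

/-- Arithmetic core of Theorem 3.3: the number of zero coordinates of a codeword is at
most `max(⌊h⌋(ℓ−1), φ(1), φ(⌊h/√ℓ⌋))` with `h = r√(H²/2)`. -/
theorem stmt_7 (q T m ℓ H2 : ℝ) (hm : 0 ≤ m) (hℓ : 1 ≤ ℓ) (hH2 : 0 < H2)
    (r : ℕ) (hr : 0 < r) (k1 k2 : ℕ) (hk : 1 ≤ k1 + k2)
    (n : ℕ → ℕ) (a : ℕ → ℝ)
    (hn : ∀ i, i < k1 + k2 → 0 < n i) (ha : ∀ i, i < k1 + k2 → 0 < a i)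
    (hsum : ∑ i ∈ Finset.range (k1 + k2), (n i : ℝ) * a i = (r : ℝ) * H2)
    (π N : ℕ → ℝ)
    (hπ : ∀ i, i < k1 + k2 → 2 * (π i - 1) * H2 ≤ a i ^ 2)
    (h1 : ∀ i, i < k1 → ℓ + 1 ≤ π i ∧ N i ≤ (q + 1 - T - 2 * m) + m * π i)
    (h2 : ∀ i, k1 ≤ i → i < k1 + k2 → (2 ≤ π i ∧ π i ≤ ℓ) ∧ N i ≤ π i - 1)
    (h : ℝ) (hh : h = (r : ℝ) * Real.sqrt (H2 / 2))
    (φ : ℝ → ℝ)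
    (hφ : ∀ x, φ x =
      m * (h - x * Real.sqrt ℓ) ^ 2 + 2 * m * Real.sqrt ℓ * (h - x * Real.sqrt ℓ)
        + x * (q + 1 - T + (ℓ - 1) * (m - Real.sqrt ℓ)) + h * (ℓ - 1)) :
    ∑ i ∈ Finset.range (k1 + k2), N i ≤
      max (max ((⌊h⌋ : ℝ) * (ℓ - 1)) (φ 1)) (φ ((⌊h / Real.sqrt ℓ⌋ : ℤ) : ℝ)) := by
  have hℓ0 : (0:ℝ) ≤ ℓ := by linarith
  set k := k1 + k2 with hkdef
  set s := Real.sqrt ℓ with hsdef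
  have hs1 : 1 ≤ s := by
    rw [hsdef, show (1:ℝ) = Real.sqrt 1 by simp]
    exact Real.sqrt_le_sqrt hℓ
  have hs0 : (0:ℝ) < s := by linarith
  have hssq : s ^ 2 = ℓ := Real.sq_sqrt hℓ0
  have h2H : (0:ℝ) < 2 * H2 := by linarith
  set t := Real.sqrt (2 * H2) with htdef
  have ht0 : 0 < t := Real.sqrt_pos.mpr h2H
  have htsq : t ^ 2 = 2 * H2 := Real.sq_sqrt h2H.le
  set b : ℕ → ℝ := fun i => a i / t with hbdef
  have hb0 : ∀ i, i < k → 0 < b i := fun i hi => div_pos (ha i hi) ht0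
  have hbsq : ∀ i, i < k → π i - 1 ≤ b i ^ 2 := by
    intro i hi
    have e : b i ^ 2 = a i ^ 2 / (2 * H2) := by
      rw [hbdef]; simp only []; rw [div_pow, htsq]
    rw [e, le_div_iff₀ h2H]
    have := hπ i hi
    linarith
  have hbsum : ∑ i ∈ Finset.range k, (n i : ℝ) * b i = h := by
    have e1 : ∑ i ∈ Finset.range k, (n i : ℝ) * b i
        = (∑ i ∈ Finset.range k, (n i : ℝ) * a i) / t := by
      rw [Finset.sum_div]
      exact Finset.sum_congr rfl fun i _ => (mul_div_assoc _ _ _).symm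
    rw [e1, hsum, hh, div_eq_iff ht0.ne', mul_assoc]
    congr 1
    rw [htdef, ← Real.sqrt_mul (by positivity),
      show H2 / 2 * (2 * H2) = H2 ^ 2 by ring]
    exact (Real.sqrt_sq hH2.le).symm
  have hb_lo1 : ∀ i, i < k1 → s ≤ b i := by
    intro i hi
    have hik : i < k := lt_of_lt_of_le hi (Nat.le_add_right _ _)
    have h1' := (h1 i hi).1
    have hl : ℓ ≤ b i ^ 2 := by have := hbsq i hik; linarith
    have := Real.sqrt_le_sqrt hl
    rwa [Real.sqrt_sq (hb0 i hik).le] at this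
  have hb_lo2 : ∀ i ∈ Finset.Ico k1 k, (1:ℝ) ≤ b i := by
    intro i hi
    rw [Finset.mem_Ico] at hi
    have h2' := (h2 i hi.1 hi.2).1.1
    have h1b : 1 ≤ b i ^ 2 := by have := hbsq i hi.2; linarith
    nlinarith [hb0 i hi.2]
  have hsplit : ∀ f : ℕ → ℝ, ∑ i ∈ Finset.range k, f i
      = ∑ i ∈ Finset.range k1, f i + ∑ i ∈ Finset.Ico k1 k, f i := by
    intro f
    rw [Finset.range_eq_Ico,
      ← Finset.sum_Ico_consecutive f (Nat.zero_le k1) (Nat.le_add_right k1 k2),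
      ← Finset.range_eq_Ico]
  set S1 := ∑ i ∈ Finset.range k1, b i with hS1def
  have hS1lo : (k1 : ℝ) * s ≤ S1 := by
    calc (k1:ℝ) * s = ∑ _i ∈ Finset.range k1, s := by
          rw [Finset.sum_const, Finset.card_range, nsmul_eq_mul]
      _ ≤ S1 := Finset.sum_le_sum fun i hi => hb_lo1 i (Finset.mem_range.mp hi)
  have hS1k2 : S1 + (k2:ℝ) ≤ h := by
    have e2 : ∑ i ∈ Finset.range k, b i ≤ ∑ i ∈ Finset.range k, (n i:ℝ) * b i := by
      refine Finset.sum_le_sum fun i hi => ?_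
      have hik := Finset.mem_range.mp hi
      have h1n : (1:ℝ) ≤ (n i : ℝ) := by exact_mod_cast hn i hik
      nlinarith [hb0 i hik]
    rw [hsplit b, hbsum] at e2
    have e3 : (k2:ℝ) ≤ ∑ i ∈ Finset.Ico k1 k, b i := by
      calc (k2:ℝ) = ∑ _i ∈ Finset.Ico k1 k, (1:ℝ) := by
            rw [Finset.sum_const, Nat.card_Ico, nsmul_eq_mul, mul_one, hkdef,
              Nat.add_sub_cancel_left]
        _ ≤ _ := Finset.sum_le_sum hb_lo2
    linarith
  have hsumsq : ∑ i ∈ Finset.range k1, b i ^ 2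
      ≤ (S1 - (k1:ℝ) * s) ^ 2 + 2 * s * S1 - (k1:ℝ) * ℓ := by
    have key := sum_sq_le' (Finset.range k1) (fun i => b i - s) (fun i hi => by
      have := hb_lo1 i (Finset.mem_range.mp hi)
      linarith)
    have e4 : ∑ i ∈ Finset.range k1, (b i - s) = S1 - (k1:ℝ) * s := by
      rw [Finset.sum_sub_distrib, Finset.sum_const, Finset.card_range, nsmul_eq_mul, hS1def]
    have e6 : ∑ i ∈ Finset.range k1, (2*s*b i - s^2) = 2*s*S1 - (k1:ℝ)*s^2 := by
      rw [Finset.sum_sub_distrib, ← Finset.mul_sum, Finset.sum_const, Finset.card_range,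
        nsmul_eq_mul, hS1def]
    have e7 : (∑ i ∈ Finset.range k1, (b i - s) ^ 2)
        + (∑ i ∈ Finset.range k1, (2*s*b i - s^2)) = ∑ i ∈ Finset.range k1, b i ^2 := by
      rw [← Finset.sum_add_distrib]
      exact Finset.sum_congr rfl fun i _ => by ring
    have e8 : (k1:ℝ) * s^2 = (k1:ℝ) * ℓ := by rw [hssq]
    rw [e4] at key
    linarith
  have hN1 : ∑ i ∈ Finset.range k1, N i
      ≤ (k1:ℝ) * (q + 1 - T - m) + m * ∑ i ∈ Finset.range k1, b i ^ 2 := by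
    have hb : ∀ i ∈ Finset.range k1, N i ≤ (q + 1 - T - m) + m * b i ^ 2 := by
      intro i hi
      have hik1 := Finset.mem_range.mp hi
      have hik : i < k := lt_of_lt_of_le hik1 (Nat.le_add_right _ _)
      have hbb := hbsq i hik
      have h1' := (h1 i hik1).2
      nlinarith [mul_le_mul_of_nonneg_left hbb hm]
    calc ∑ i ∈ Finset.range k1, N i
        ≤ ∑ i ∈ Finset.range k1, ((q + 1 - T - m) + m * b i ^ 2) := Finset.sum_le_sum hb
      _ = (k1:ℝ) * (q + 1 - T - m) + m * ∑ i ∈ Finset.range k1, b i ^ 2 := by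
          rw [Finset.sum_add_distrib, Finset.sum_const, Finset.card_range, nsmul_eq_mul,
            Finset.mul_sum]
  have hN2 : ∑ i ∈ Finset.Ico k1 k, N i ≤ (k2:ℝ) * (ℓ - 1) := by
    calc ∑ i ∈ Finset.Ico k1 k, N i ≤ ∑ _i ∈ Finset.Ico k1 k, (ℓ - 1) := by
          refine Finset.sum_le_sum fun i hi => ?_
          rw [Finset.mem_Ico] at hi
          have := h2 i hi.1 hi.2
          linarith [this.1.2, this.2]
      _ = (k2:ℝ) * (ℓ - 1) := by
          rw [Finset.sum_const, Nat.card_Ico, hkdef, Nat.add_sub_cancel_left, nsmul_eq_mul]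
  rcases Nat.eq_zero_or_pos k1 with hk10 | hk11
  · -- case k1 = 0
    have hS10 : S1 = 0 := by rw [hS1def, hk10]; simp
    have hk2h : (k2:ℝ) ≤ h := by linarith
    have hfl : (k2:ℝ) ≤ ((⌊h⌋ : ℤ) : ℝ) := by
      have : (k2:ℤ) ≤ ⌊h⌋ := Int.le_floor.mpr (by exact_mod_cast hk2h)
      exact_mod_cast this
    have h0 : ∑ i ∈ Finset.range k1, N i = 0 := by rw [hk10]; simp
    have hmul : (k2:ℝ) * (ℓ-1) ≤ ((⌊h⌋:ℤ):ℝ) * (ℓ-1) :=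
      mul_le_mul_of_nonneg_right hfl (by linarith)
    have hfin : ∑ i ∈ Finset.range k, N i ≤ ((⌊h⌋:ℤ):ℝ) * (ℓ - 1) := by
      rw [hsplit N]
      linarith
    exact hfin.trans (le_max_of_le_left (le_max_left _ _))
  · -- case k1 ≥ 1
    have hk1R : (1:ℝ) ≤ (k1:ℝ) := by exact_mod_cast hk11
    set K : ℤ := ⌊h / s⌋ with hKdef
    have hk2nn : (0:ℝ) ≤ (k2:ℝ) := Nat.cast_nonneg k2
    have hk1s : (k1:ℝ) * s ≤ h := by linarith
    have hk1K : (k1:ℝ) ≤ (K:ℝ) := by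
      have : (k1:ℤ) ≤ K := Int.le_floor.mpr (by
        push_cast
        rw [le_div_iff₀ hs0]
        exact hk1s)
      exact_mod_cast this
    have h1K : (1:ℝ) ≤ (K:ℝ) := le_trans hk1R hk1K
    have hmain : ∑ i ∈ Finset.range k, N i ≤ φ (k1:ℝ) := by
      rw [hsplit N]
      have key : (k1:ℝ)*(q+1-T-m) + m*((S1 - (k1:ℝ)*s)^2 + 2*s*S1 - (k1:ℝ)*ℓ)
          + (k2:ℝ)*(ℓ-1) ≤ φ (k1:ℝ) := by
        rw [hφ (k1:ℝ)]
        have t1 : 0 ≤ m * (h - S1) * (h + S1 - 2*(k1:ℝ)*s) := by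
          apply mul_nonneg (mul_nonneg hm (by linarith : (0:ℝ) ≤ h - S1))
          linarith
        have t2 : 0 ≤ 2*m*s*(h - S1) := by
          apply mul_nonneg (by positivity)
          linarith
        have t3 : 0 ≤ (ℓ-1)*(h - (k1:ℝ)*s - (k2:ℝ)) := by
          apply mul_nonneg (by linarith)
          linarith
        have iden : m * (h - (k1:ℝ)*s)^2 + 2*m*s*(h-(k1:ℝ)*s)
            + (k1:ℝ)*(q+1-T+(ℓ-1)*(m-s)) + h*(ℓ-1)
            - ((k1:ℝ)*(q+1-T-m) + m*((S1 - (k1:ℝ)*s)^2 + 2*s*S1 - (k1:ℝ)*ℓ) + (k2:ℝ)*(ℓ-1))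
            = m*(h-S1)*(h+S1-2*(k1:ℝ)*s) + 2*m*s*(h-S1) + (ℓ-1)*(h-(k1:ℝ)*s-(k2:ℝ)) := by
          linear_combination (-2 * (k1:ℝ) * m) * hssq
        linarith
      have G2 : m * (∑ i ∈ Finset.range k1, b i^2)
          ≤ m * ((S1-(k1:ℝ)*s)^2 + 2*s*S1 - (k1:ℝ)*ℓ) := mul_le_mul_of_nonneg_left hsumsq hm
      linarith
    have hφ' : ∀ x : ℝ, φ x = (m*ℓ)*x^2
        + (-(2*m*h*s) - 2*m*ℓ + (q+1-T+(ℓ-1)*(m-s)))*x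
        + (m*h^2 + 2*m*s*h + h*(ℓ-1)) := by
      intro x
      rw [hφ x]
      linear_combination (m*x^2 - 2*m*x) * hssq
    have hconv : φ (k1:ℝ) ≤ max (φ 1) (φ (K:ℝ)) := by
      have hq := quad_le_max' (m*ℓ)
        (-(2*m*h*s) - 2*m*ℓ + (q+1-T+(ℓ-1)*(m-s))) 1 (k1:ℝ) (K:ℝ)
        (mul_nonneg hm hℓ0) hk1R hk1K
      rw [hφ' (k1:ℝ), hφ' 1, hφ' (K:ℝ), max_add_add_right]
      linarith
    calc ∑ i ∈ Finset.range k, N i ≤ φ (k1:ℝ) := hmain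
      _ ≤ max (φ 1) (φ (K:ℝ)) := hconv
      _ ≤ max (max (((⌊h⌋:ℤ):ℝ) * (ℓ - 1)) (φ 1)) (φ (K:ℝ)) := max_le_max (le_max_right _ _) le_rfl
end

section
/- Fix a real number ℓ ≥ 1 and a real number ρ with 0 < ρ < 1/2, and let T : ℝ → ℝ be any function such that |T(q)| ≤ 4·√q for all q ≥ 1. For q ≥ 1 set m(q) := ⌊2√q⌋, h(q) := q^ρ, c(q) := q + 1 − T(q) + (ℓ − 1)·(m(q) − √ℓ), φ_q(x) := m(q)·(h(q) − x·√ℓ)² + 2·m(q)·√ℓ·(h(q) − x·√ℓ) + x·c(q) + h(q)·(ℓ − 1), and M(q) := max(⌊h(q)⌋·(ℓ − 1), φ_q(1), φ_q(⌊h(q)/√ℓ⌋)). Then √ℓ·M(q)/q^{1+ρ} tends to 1 as q tends to infinity. -/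
/-- The function `φ_q` of Theorem 3.3, with `m = ⌊2√q⌋`, `h = q^ρ` and
`c = q + 1 − T(q) + (λ − 1)(m − √λ)`. -/
noncomputable def phiQ (lam ρ : ℝ) (T : ℝ → ℝ) (q x : ℝ) : ℝ :=
  (⌊2 * Real.sqrt q⌋ : ℝ) * (q ^ ρ - x * Real.sqrt lam) ^ 2
    + 2 * (⌊2 * Real.sqrt q⌋ : ℝ) * Real.sqrt lam * (q ^ ρ - x * Real.sqrt lam)
    + x * (q + 1 - T q + (lam - 1) * ((⌊2 * Real.sqrt q⌋ : ℝ) - Real.sqrt lam))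
    + q ^ ρ * (lam - 1)

/-- The quantity `M(q) = max(⌊h⌋(λ−1), φ_q(1), φ_q(⌊h/√λ⌋))` with `h = q^ρ`. -/
noncomputable def MQ (lam ρ : ℝ) (T : ℝ → ℝ) (q : ℝ) : ℝ :=
  max (max ((⌊q ^ ρ⌋ : ℝ) * (lam - 1)) (phiQ lam ρ T q 1))
    (phiQ lam ρ T q ((⌊q ^ ρ / Real.sqrt lam⌋ : ℤ) : ℝ))

open Filter Real in
lemma aux_zero {C e : ℝ} (he : 0 < e) {f : ℝ → ℝ}
    (h : ∀ᶠ q in Filter.atTop, |f q| ≤ C * q ^ (-e)) :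
    Filter.Tendsto f Filter.atTop (nhds 0) := by
  apply squeeze_zero_norm' (by simpa [Real.norm_eq_abs] using h)
  simpa using (tendsto_rpow_neg_atTop he).const_mul C


open Filter Real in
set_option maxHeartbeats 2000000 in
/-- Asymptotic analysis of Remark 3.5 for `0 < ρ < 1/2`:
`√ℓ · M(q) / q^{1+ρ} → 1` as `q → ∞`. -/
theorem stmt_10 (ℓ ρ : ℝ) (hℓ : 1 ≤ ℓ) (hρ0 : 0 < ρ) (hρ : ρ < 1 / 2)
    (T : ℝ → ℝ) (hT : ∀ q : ℝ, 1 ≤ q → |T q| ≤ 4 * Real.sqrt q) :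
    Filter.Tendsto (fun q : ℝ => Real.sqrt ℓ * MQ ℓ ρ T q / q ^ (1 + ρ))
      Filter.atTop (nhds 1) := by
  set s := Real.sqrt ℓ with hs_def
  have hs1 : 1 ≤ s := Real.one_le_sqrt.2 hℓ
  have hs0 : 0 < s := lt_of_lt_of_le one_pos hs1
  have hss : s * s = ℓ := Real.mul_self_sqrt (by linarith)
  have hsℓ : s ≤ ℓ := by nlinarith
  clear_value s
  -- term a
  have ha : Tendsto (fun q : ℝ => s * ((⌊q ^ ρ⌋ : ℝ) * (ℓ - 1)) / q ^ (1 + ρ))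
      atTop (nhds 0) := by
    apply aux_zero (C := s * ℓ) one_pos
    filter_upwards [eventually_ge_atTop 1] with q hq
    have hq0 : (0:ℝ) < q := by linarith
    have hh1 : 1 ≤ q ^ ρ := Real.one_le_rpow hq hρ0.le
    have hN : (0:ℝ) < q ^ (1 + ρ) := Real.rpow_pos_of_pos hq0 _
    have hf0 : (0:ℝ) ≤ (⌊q ^ ρ⌋ : ℝ) := by
      have : (0:ℤ) ≤ ⌊q ^ ρ⌋ := Int.le_floor.2 (by push_cast; linarith)
      exact_mod_cast this
    have hfle : ((⌊q ^ ρ⌋ : ℤ) : ℝ) ≤ q ^ ρ := Int.floor_le _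
    rw [abs_of_nonneg (div_nonneg (mul_nonneg hs0.le (mul_nonneg hf0 (by linarith))) hN.le)]
    rw [div_le_iff₀ hN]
    have hE : q ^ (-(1:ℝ)) * q ^ (1 + ρ) = q ^ ρ := by
      rw [← Real.rpow_add hq0]; norm_num
    have h1 : (⌊q ^ ρ⌋ : ℝ) * (ℓ - 1) ≤ q ^ ρ * (ℓ - 1) :=
      mul_le_mul_of_nonneg_right hfle (by linarith)
    have h2 : q ^ ρ * (ℓ - 1) ≤ q ^ ρ * ℓ := by nlinarith
    have h3 : s * ((⌊q ^ ρ⌋ : ℝ) * (ℓ - 1)) ≤ s * (q ^ ρ * ℓ) :=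
      mul_le_mul_of_nonneg_left (h1.trans h2) hs0.le
    have h4 : s * (q ^ ρ * ℓ) = s * ℓ * q ^ (-(1:ℝ)) * q ^ (1 + ρ) := by
      rw [mul_assoc (s * ℓ), hE]; ring
    linarith [h3, h4.le]
  -- term b
  have hb : Tendsto (fun q : ℝ => s * phiQ ℓ ρ T q 1 / q ^ (1 + ρ)) atTop (nhds 0) := by
    have he : 0 < min (1/2 - ρ) ρ := lt_min (by linarith) hρ0
    apply aux_zero (C := s * (2*ℓ + (6 + (ℓ-1)*(2+ℓ) + ℓ))) he
    filter_upwards [eventually_ge_atTop 1] with q hq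
    have hq0 : (0:ℝ) < q := by linarith
    set r := Real.sqrt q with hr_def
    set h := q ^ ρ with hh_def
    set m := ((⌊2 * Real.sqrt q⌋ : ℤ) : ℝ) with hm_def
    clear_value r h m
    have hr1 : 1 ≤ r := by rw [hr_def]; exact Real.one_le_sqrt.2 hq
    have hrr : r * r = q := by rw [hr_def]; exact Real.mul_self_sqrt hq0.le
    have hrq : r ≤ q := by nlinarith
    have hh1 : 1 ≤ h := by rw [hh_def]; exact Real.one_le_rpow hq hρ0.le
    have hhq : h ≤ q := by
      rw [hh_def]
      calc q ^ ρ ≤ q ^ (1:ℝ) := Real.rpow_le_rpow_of_exponent_le hq (by linarith)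
        _ = q := Real.rpow_one q
    have hm0 : (0:ℝ) ≤ m := by
      have : (0:ℤ) ≤ ⌊2 * Real.sqrt q⌋ := Int.le_floor.2 (by push_cast; linarith)
      rw [hm_def]; exact_mod_cast this
    have hm2r : m ≤ 2 * r := by rw [hm_def, hr_def]; exact Int.floor_le _
    have hTq : -(4*r) ≤ T q ∧ T q ≤ 4*r := by
      rw [hr_def]; exact abs_le.1 (hT q hq)
    have hN : (0:ℝ) < q ^ (1 + ρ) := Real.rpow_pos_of_pos hq0 _
    -- bound |phi(1)|
    have hphi : |phiQ ℓ ρ T q 1| ≤ 2*ℓ*(h*h*r) + (6 + (ℓ-1)*(2+ℓ) + ℓ)*q := by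
      have hrw : phiQ ℓ ρ T q 1 =
          m * (h*h) - m * (s*s) + (q + 1 - T q + ((ℓ-1)*m - (ℓ-1)*s)) + h*(ℓ-1) := by
        rw [phiQ, ← hs_def, ← hm_def, ← hh_def]; ring
      rw [hrw]
      have hl1 : (0:ℝ) ≤ ℓ - 1 := by linarith
      have hhh1 : (1:ℝ) ≤ h*h := by nlinarith
      have a0 : 0 ≤ m * (h*h) := mul_nonneg hm0 (by positivity)
      have a1 : m * (h*h) ≤ 2*r*(h*h) := mul_le_mul_of_nonneg_right hm2r (by positivity)
      have a2 : 2*r*(h*h) ≤ 2*ℓ*(h*h*r) := by nlinarith [mul_nonneg (mul_nonneg hl1 (by linarith : (0:ℝ) ≤ r)) (by linarith : (0:ℝ) ≤ h*h - 1)]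
      have a3 : 0 ≤ m * (s*s) := mul_nonneg hm0 (by positivity)
      have a4 : m * (s*s) = m * ℓ := by rw [hss]
      have a5 : m * ℓ ≤ 2*r*ℓ := mul_le_mul_of_nonneg_right hm2r (by linarith)
      have a6 : 2*r*ℓ ≤ 2*ℓ*(h*h*r) := by nlinarith [mul_nonneg (mul_nonneg (by linarith : (0:ℝ) ≤ ℓ) (by linarith : (0:ℝ) ≤ r)) (by linarith : (0:ℝ) ≤ h*h - 1)]
      have c1 : (ℓ-1)*m ≤ (ℓ-1)*(2*r) := mul_le_mul_of_nonneg_left hm2r hl1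
      have c2 : (ℓ-1)*(2*r) ≤ (ℓ-1)*(2*q) := mul_le_mul_of_nonneg_left (by linarith) hl1
      have c3 : 0 ≤ (ℓ-1)*m := mul_nonneg hl1 hm0
      have c4 : 0 ≤ (ℓ-1)*s := mul_nonneg hl1 hs0.le
      have c5 : (ℓ-1)*s ≤ (ℓ-1)*ℓ := mul_le_mul_of_nonneg_left hsℓ hl1
      have c6 : (ℓ-1)*ℓ ≤ (ℓ-1)*ℓ*q := le_mul_of_one_le_right (mul_nonneg hl1 (by linarith)) hq
      have c7 : 0 ≤ (ℓ-1)*ℓ*q := mul_nonneg (mul_nonneg hl1 (by linarith)) hq0.le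
      have d0 : 0 ≤ h*(ℓ-1) := mul_nonneg (by linarith) hl1
      have e0 : 0 ≤ ℓ*q := mul_nonneg (by linarith) hq0.le
      have d1 : h*(ℓ-1) = h*ℓ - h := by ring
      have d2 : h*ℓ ≤ q*ℓ := mul_le_mul_of_nonneg_right hhq (by linarith)
      have hrhs : (6 + (ℓ-1)*(2+ℓ) + ℓ)*q = 6*q + (ℓ-1)*(2*q) + (ℓ-1)*ℓ*q + ℓ*q := by ring
      rw [abs_le]
      constructor <;> [skip; skip] <;> linarith [hTq.1, hTq.2]
    -- put it together
    have habs : |s * phiQ ℓ ρ T q 1 / q ^ (1+ρ)| = s * |phiQ ℓ ρ T q 1| / q ^ (1+ρ) := by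
      rw [abs_div, abs_of_pos hN, abs_mul, abs_of_pos hs0]
    rw [habs, div_le_iff₀ hN]
    set e := min (1/2 - ρ) ρ with he_def
    have hE1 : h*h*r ≤ q ^ (-e) * q ^ (1 + ρ) := by
      have : h*h*r = q ^ (ρ + ρ + 1/2) := by
        rw [hh_def, hr_def, Real.sqrt_eq_rpow, ← Real.rpow_add hq0, ← Real.rpow_add hq0]
      rw [this, ← Real.rpow_add hq0]
      apply Real.rpow_le_rpow_of_exponent_le hq
      have := min_le_left (1/2 - ρ) ρ
      rw [he_def]; linarith
    have hE2 : q ≤ q ^ (-e) * q ^ (1 + ρ) := by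
      rw [← Real.rpow_add hq0]
      calc q = q ^ (1:ℝ) := (Real.rpow_one q).symm
        _ ≤ q ^ (-e + (1 + ρ)) := by
          apply Real.rpow_le_rpow_of_exponent_le hq
          have := min_le_right (1/2 - ρ) ρ
          rw [he_def]; linarith
    have hK : (0:ℝ) ≤ 6 + (ℓ-1)*(2+ℓ) + ℓ := by nlinarith
    have step1 : s * |phiQ ℓ ρ T q 1| ≤ s * (2*ℓ*(h*h*r) + (6 + (ℓ-1)*(2+ℓ) + ℓ)*q) :=
      mul_le_mul_of_nonneg_left hphi hs0.le
    have step2 : s * (2*ℓ*(h*h*r) + (6 + (ℓ-1)*(2+ℓ) + ℓ)*q)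
        ≤ s * (2*ℓ*(q ^ (-e) * q ^ (1+ρ)) + (6 + (ℓ-1)*(2+ℓ) + ℓ)*(q ^ (-e) * q ^ (1+ρ))) := by
      have c1 : 2*ℓ*(h*h*r) ≤ 2*ℓ*(q ^ (-e) * q ^ (1+ρ)) :=
        mul_le_mul_of_nonneg_left hE1 (by linarith)
      have c2 : (6 + (ℓ-1)*(2+ℓ) + ℓ)*q ≤ (6 + (ℓ-1)*(2+ℓ) + ℓ)*(q ^ (-e) * q ^ (1+ρ)) :=
        mul_le_mul_of_nonneg_left hE2 hK
      exact mul_le_mul_of_nonneg_left (by linarith) hs0.le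
    calc s * |phiQ ℓ ρ T q 1| ≤ s * (2*ℓ*(q ^ (-e) * q ^ (1+ρ)) + (6 + (ℓ-1)*(2+ℓ) + ℓ)*(q ^ (-e) * q ^ (1+ρ))) := step1.trans step2
      _ = s * (2*ℓ + (6 + (ℓ-1)*(2+ℓ) + ℓ)) * q ^ (-e) * q ^ (1+ρ) := by ring
  -- main term
  have hc : Tendsto (fun q : ℝ => s * phiQ ℓ ρ T q ((⌊q ^ ρ / s⌋ : ℤ) : ℝ) / q ^ (1 + ρ))
      atTop (nhds 1) := by
    -- u → 1
    have hu0 : Tendsto (fun q : ℝ => s * ((⌊q ^ ρ / s⌋ : ℤ) : ℝ) / q ^ ρ - 1) atTop (nhds 0) := by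
      apply aux_zero (C := s) hρ0
      filter_upwards [eventually_ge_atTop 1] with q hq
      have hq0 : (0:ℝ) < q := by linarith
      have hh1 : 1 ≤ q ^ ρ := Real.one_le_rpow hq hρ0.le
      have hh0 : (0:ℝ) < q ^ ρ := by linarith
      set X := ((⌊q ^ ρ / s⌋ : ℤ) : ℝ) with hX_def
      clear_value X
      have hx_le : X ≤ q ^ ρ / s := by rw [hX_def]; exact Int.floor_le _
      have hx_gt : q ^ ρ / s - 1 < X := by rw [hX_def]; exact Int.sub_one_lt_floor _
      have key : s * (q ^ ρ / s) = q ^ ρ := by field_simp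
      have h1 : q ^ ρ - s ≤ s * X := by nlinarith
      have h2 : s * X ≤ q ^ ρ := by nlinarith
      have hneg : q ^ (-ρ) = (q ^ ρ)⁻¹ := Real.rpow_neg hq0.le ρ
      rw [hneg, abs_le]
      constructor
      · have expand : s * X / q ^ ρ - 1 = (s * X - q ^ ρ) / q ^ ρ := by field_simp
        rw [expand]
        have : -(s * (q ^ ρ)⁻¹) = (-s) / q ^ ρ := by ring
        rw [this]
        exact (div_le_div_iff_of_pos_right hh0).2 (by linarith)
      · have : s * X / q ^ ρ ≤ 1 := by
          rw [div_le_one hh0]; linarith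
        have hpos : 0 ≤ s * (q ^ ρ)⁻¹ := by positivity
        linarith
    have hu : Tendsto (fun q : ℝ => s * ((⌊q ^ ρ / s⌋ : ℤ) : ℝ) / q ^ ρ) atTop (nhds 1) := by
      have := hu0.add (tendsto_const_nhds (x := (1:ℝ)))
      simpa using this
    -- v → 1
    have hv0 : Tendsto (fun q : ℝ =>
        (q + 1 - T q + (ℓ - 1) * (((⌊2 * Real.sqrt q⌋ : ℤ) : ℝ) - s)) / q - 1) atTop (nhds 0) := by
      apply aux_zero (C := 5 + (ℓ-1)*(2+ℓ)) (e := 1/2) (by norm_num)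
      filter_upwards [eventually_ge_atTop 1] with q hq
      have hq0 : (0:ℝ) < q := by linarith
      set r := Real.sqrt q with hr_def
      set m := ((⌊2 * Real.sqrt q⌋ : ℤ) : ℝ) with hm_def
      clear_value r m
      have hr1 : 1 ≤ r := by rw [hr_def]; exact Real.one_le_sqrt.2 hq
      have hrr : r * r = q := by rw [hr_def]; exact Real.mul_self_sqrt hq0.le
      have hm0 : (0:ℝ) ≤ m := by
        have : (0:ℤ) ≤ ⌊2 * Real.sqrt q⌋ := Int.le_floor.2 (by push_cast; rw [← hr_def]; linarith)
        rw [hm_def]; exact_mod_cast this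
      have hm2r : m ≤ 2 * r := by rw [hm_def, hr_def]; exact Int.floor_le _
      have hTq : -(4*r) ≤ T q ∧ T q ≤ 4*r := by rw [hr_def]; exact abs_le.1 (hT q hq)
      have hl1 : (0:ℝ) ≤ ℓ - 1 := by linarith
      have expand : (q + 1 - T q + (ℓ-1)*(m - s)) / q - 1 = (1 - T q + ((ℓ-1)*m - (ℓ-1)*s)) / q := by
        field_simp; ring
      rw [expand, abs_div, abs_of_pos hq0]
      have hnum : |1 - T q + ((ℓ-1)*m - (ℓ-1)*s)| ≤ (5 + (ℓ-1)*(2+ℓ)) * r := by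
        have c1 : (ℓ-1)*m ≤ (ℓ-1)*(2*r) := mul_le_mul_of_nonneg_left hm2r hl1
        have c3 : 0 ≤ (ℓ-1)*m := mul_nonneg hl1 hm0
        have c4 : 0 ≤ (ℓ-1)*s := mul_nonneg hl1 hs0.le
        have c5 : (ℓ-1)*s ≤ (ℓ-1)*ℓ := mul_le_mul_of_nonneg_left hsℓ hl1
        have c6 : (ℓ-1)*ℓ ≤ (ℓ-1)*ℓ*r := le_mul_of_one_le_right (mul_nonneg hl1 (by linarith)) hr1
        have c7 : (ℓ-1)*(2*r) ≤ (ℓ-1)*(2+ℓ)*r := by nlinarith [mul_nonneg (mul_nonneg hl1 (by linarith : (0:ℝ) ≤ ℓ)) (by linarith : (0:ℝ) ≤ r)]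
        have hrhs : (5 + (ℓ-1)*(2+ℓ)) * r = 5*r + (ℓ-1)*(2+ℓ)*r := by ring
        have hrhs2 : (ℓ-1)*(2+ℓ)*r = (ℓ-1)*(2*r) + (ℓ-1)*ℓ*r := by ring
        rw [abs_le]
        constructor <;> linarith [hTq.1, hTq.2]
      have hrq : r / q = q ^ (-(1/2):ℝ) := by
        rw [hr_def, Real.sqrt_eq_rpow, show (-(1/2):ℝ) = 1/2 - 1 by norm_num,
          Real.rpow_sub hq0, Real.rpow_one]
      calc |1 - T q + ((ℓ-1)*m - (ℓ-1)*s)| / q ≤ (5 + (ℓ-1)*(2+ℓ)) * r / q := by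
            exact (div_le_div_iff_of_pos_right hq0).2 hnum
        _ = (5 + (ℓ-1)*(2+ℓ)) * (r / q) := by ring
        _ = (5 + (ℓ-1)*(2+ℓ)) * q ^ (-(1/2):ℝ) := by rw [hrq]
    have hv : Tendsto (fun q : ℝ =>
        (q + 1 - T q + (ℓ - 1) * (((⌊2 * Real.sqrt q⌋ : ℤ) : ℝ) - s)) / q) atTop (nhds 1) := by
      have := hv0.add (tendsto_const_nhds (x := (1:ℝ)))
      simpa using this
    -- A → 0
    have hA : Tendsto (fun q : ℝ => s * (((⌊2 * Real.sqrt q⌋ : ℤ) : ℝ) * (q ^ ρ - ((⌊q ^ ρ / s⌋ : ℤ) : ℝ) * s) ^ 2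
        + 2 * ((⌊2 * Real.sqrt q⌋ : ℤ) : ℝ) * s * (q ^ ρ - ((⌊q ^ ρ / s⌋ : ℤ) : ℝ) * s)
        + q ^ ρ * (ℓ - 1)) / q ^ (1 + ρ)) atTop (nhds 0) := by
      apply aux_zero (C := 7 * s * ℓ) (e := 1/2) (by norm_num)
      filter_upwards [eventually_ge_atTop 1] with q hq
      have hq0 : (0:ℝ) < q := by linarith
      set r := Real.sqrt q with hr_def
      set m := ((⌊2 * Real.sqrt q⌋ : ℤ) : ℝ) with hm_def
      set X := ((⌊q ^ ρ / s⌋ : ℤ) : ℝ) with hX_def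
      set h := q ^ ρ with hh_def
      clear_value r m X h
      have hr1 : 1 ≤ r := by rw [hr_def]; exact Real.one_le_sqrt.2 hq
      have hh1 : 1 ≤ h := by rw [hh_def]; exact Real.one_le_rpow hq hρ0.le
      have hm0 : (0:ℝ) ≤ m := by
        have : (0:ℤ) ≤ ⌊2 * Real.sqrt q⌋ := Int.le_floor.2 (by push_cast; rw [← hr_def]; linarith)
        rw [hm_def]; exact_mod_cast this
      have hm2r : m ≤ 2 * r := by rw [hm_def, hr_def]; exact Int.floor_le _
      have hx_le : X ≤ h / s := by rw [hX_def, hh_def]; exact Int.floor_le _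
      have hx_gt : h / s - 1 < X := by rw [hX_def, hh_def]; exact Int.sub_one_lt_floor _
      have key : s * (h / s) = h := by field_simp
      have hd0 : 0 ≤ h - X * s := by nlinarith
      have hds : h - X * s ≤ s := by nlinarith
      have hl1 : (0:ℝ) ≤ ℓ - 1 := by linarith
      set d := h - X * s with hd_def
      have t1 : m * d ^ 2 ≤ 2 * r * ℓ := by
        have hd2 : d ^ 2 ≤ s * s := by nlinarith
        have e1 : m * d ^ 2 ≤ (2*r) * (s*s) :=
          mul_le_mul hm2r hd2 (sq_nonneg d) (by linarith)
        have e2 : (2*r) * (s*s) = 2 * r * ℓ := by rw [hss]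
        linarith
      have t2 : 2 * m * s * d ≤ 4 * r * ℓ := by
        have e0 : s * d ≤ s * s := mul_le_mul_of_nonneg_left hds hs0.le
        have e1 : m * (s * d) ≤ (2*r) * (s*s) :=
          mul_le_mul hm2r e0 (mul_nonneg hs0.le hd0) (by linarith)
        have e2 : (2*r) * (s*s) = 2 * r * ℓ := by rw [hss]
        have e3 : 2 * m * s * d = 2 * (m * (s * d)) := by ring
        linarith
      have t3 : 0 ≤ m * d ^ 2 := mul_nonneg hm0 (sq_nonneg d)
      have t4 : 0 ≤ 2 * m * s * d := by positivity
      have t5 : 0 ≤ h * (ℓ - 1) := mul_nonneg (by linarith) hl1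
      have inner_nonneg : 0 ≤ m * d ^ 2 + 2 * m * s * d + h * (ℓ - 1) := by linarith
      have hN : (0:ℝ) < q ^ (1 + ρ) := Real.rpow_pos_of_pos hq0 _
      rw [abs_of_nonneg (div_nonneg (mul_nonneg hs0.le inner_nonneg) hN.le)]
      rw [div_le_iff₀ hN]
      have hE1 : r ≤ q ^ (-(1/2):ℝ) * q ^ (1 + ρ) := by
        rw [← Real.rpow_add hq0, hr_def, Real.sqrt_eq_rpow]
        apply Real.rpow_le_rpow_of_exponent_le hq
        linarith
      have hE2 : h ≤ q ^ (-(1/2):ℝ) * q ^ (1 + ρ) := by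
        rw [← Real.rpow_add hq0, hh_def]
        apply Real.rpow_le_rpow_of_exponent_le hq
        linarith
      have hinner : m * d ^ 2 + 2 * m * s * d + h * (ℓ - 1) ≤ 6 * ℓ * r + ℓ * h := by
        have : h * (ℓ - 1) ≤ ℓ * h := by nlinarith
        linarith
      have step : s * (m * d ^ 2 + 2 * m * s * d + h * (ℓ - 1)) ≤ s * (6 * ℓ * r + ℓ * h) :=
        mul_le_mul_of_nonneg_left hinner hs0.le
      have step2 : s * (6 * ℓ * r + ℓ * h) ≤ s * (6 * ℓ * (q ^ (-(1/2):ℝ) * q ^ (1 + ρ)) + ℓ * (q ^ (-(1/2):ℝ) * q ^ (1 + ρ))) := by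
        have c1 : 6 * ℓ * r ≤ 6 * ℓ * (q ^ (-(1/2):ℝ) * q ^ (1 + ρ)) :=
          mul_le_mul_of_nonneg_left hE1 (by linarith)
        have c2 : ℓ * h ≤ ℓ * (q ^ (-(1/2):ℝ) * q ^ (1 + ρ)) :=
          mul_le_mul_of_nonneg_left hE2 (by linarith)
        exact mul_le_mul_of_nonneg_left (by linarith) hs0.le
      calc s * (m * d ^ 2 + 2 * m * s * d + h * (ℓ - 1))
          ≤ s * (6 * ℓ * (q ^ (-(1/2):ℝ) * q ^ (1 + ρ)) + ℓ * (q ^ (-(1/2):ℝ) * q ^ (1 + ρ))) := step.trans step2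
        _ = 7 * s * ℓ * q ^ (-(1/2):ℝ) * q ^ (1 + ρ) := by ring
    -- combine
    have comb := hA.add (hu.mul hv)
    norm_num at comb
    apply comb.congr'
    filter_upwards [eventually_ge_atTop 1] with q hq
    have hq0 : (0:ℝ) < q := by linarith
    have hh0 : (0:ℝ) < q ^ ρ := Real.rpow_pos_of_pos hq0 _
    have hN : q ^ (1 + ρ) = q * q ^ ρ := by
      rw [Real.rpow_add hq0, Real.rpow_one]
    rw [phiQ, ← hs_def, hN]
    field_simp
    ring
  -- combine the three limits
  have hmax := (ha.max hb).max hc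
  norm_num at hmax
  apply hmax.congr'
  filter_upwards [eventually_ge_atTop 1] with q hq
  have hq0 : (0:ℝ) < q := by linarith
  have hN : (0:ℝ) < q ^ (1 + ρ) := Real.rpow_pos_of_pos hq0 _
  have key : ∀ a b : ℝ, max (s * a / q ^ (1 + ρ)) (s * b / q ^ (1 + ρ)) = s * max a b / q ^ (1 + ρ) := by
    intro a b
    rcases le_total a b with hab | hab
    · rw [max_eq_right hab, max_eq_right ((div_le_div_iff_of_pos_right hN).2
        (mul_le_mul_of_nonneg_left hab hs0.le))]
    · rw [max_eq_left hab, max_eq_left ((div_le_div_iff_of_pos_right hN).2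
        (mul_le_mul_of_nonneg_left hab hs0.le))]
  show _ = s * MQ ℓ ρ T q / q ^ (1 + ρ)
  rw [MQ, ← hs_def, ← key, ← key]
end

section
/- Fix a real number ℓ ≥ 1 and a real number ρ with ρ ≥ 1/2, and let T : ℝ → ℝ be any function such that |T(q)| ≤ 4·√q for all q ≥ 1. For q ≥ 1 set m(q) := ⌊2√q⌋, h(q) := q^ρ, c(q) := q + 1 − T(q) + (ℓ − 1)·(m(q) − √ℓ), φ_q(x) := m(q)·(h(q) − x·√ℓ)² + 2·m(q)·√ℓ·(h(q) − x·√ℓ) + x·c(q) + h(q)·(ℓ − 1), and M(q) := max(⌊h(q)⌋·(ℓ − 1), φ_q(1), φ_q(⌊h(q)/√ℓ⌋)). Then M(q)/q^{2ρ+1/2} tends to 2 as q tends to infinity. -/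
open Filter Real Topology

theorem tendsto_div_rpow_atTop_of_abs_le {f : ℝ → ℝ} {C a e : ℝ} (hae : a < e)
    (hf : ∀ᶠ q in atTop, |f q| ≤ C * q ^ a) :
    Tendsto (fun q => f q / q ^ e) atTop (𝓝 0) := by
  have hC : Tendsto (fun q : ℝ => C * q ^ (a - e)) atTop (𝓝 0) := by
    simpa [neg_sub] using (tendsto_rpow_neg_atTop (sub_pos.2 hae)).const_mul C
  refine squeeze_zero_norm' ?_ hC
  filter_upwards [hf, eventually_gt_atTop 0] with q hfq hq
  have hqe := rpow_pos_of_pos hq e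
  rwa [norm_eq_abs, abs_div, abs_of_pos hqe, div_le_iff₀ hqe, mul_assoc, ← rpow_add hq,
    sub_add_cancel]

theorem tendsto_floor_two_sqrt_div_sqrt :
    Tendsto (fun q : ℝ => (⌊2 * √q⌋ : ℝ) / √q) atTop (𝓝 2) := by
  refine ((tendsto_nat_floor_mul_div_atTop zero_le_two).comp tendsto_sqrt_atTop).congr fun q => ?_
  simp [natCast_floor_eq_intCast_floor (by positivity : (0 : ℝ) ≤ 2 * √q)]

theorem rpow_two_mul_add_half {q : ℝ} (hq : 0 < q) (ρ : ℝ) :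
    q ^ (2 * ρ + 1 / 2) = (q ^ ρ) ^ 2 * √q := by
  rw [rpow_add hq, sqrt_eq_rpow, mul_comm 2 ρ, rpow_mul hq.le, rpow_two]

section

variable {ℓ ρ : ℝ} {T : ℝ → ℝ} {q : ℝ}

theorem phiQ_one (hℓ : 0 ≤ ℓ) :
    phiQ ℓ ρ T q 1 = ⌊2 * √q⌋ * (q ^ ρ) ^ 2
      + (q + 1 - T q - ⌊2 * √q⌋ - (ℓ - 1) * √ℓ) + (ℓ - 1) * q ^ ρ := by
  unfold phiQ
  linear_combination (-(⌊2 * √q⌋ : ℝ)) * sq_sqrt hℓ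

theorem abs_phiQ_one_remainder_le (hℓ : 1 ≤ ℓ) (hq : 1 ≤ q) (hT : |T q| ≤ 4 * √q) :
    |q + 1 - T q - ⌊2 * √q⌋ - (ℓ - 1) * √ℓ| ≤ (8 + (ℓ - 1) * √ℓ) * q := by
  have hsq : √q ≤ q := sqrt_le_self_iff.2 (Or.inr hq)
  have hm0 : (0 : ℝ) ≤ ⌊2 * √q⌋ := by exact_mod_cast Int.floor_nonneg.2 (by positivity)
  have hm : (⌊2 * √q⌋ : ℝ) ≤ 2 * √q := Int.floor_le _
  have hc : 0 ≤ (ℓ - 1) * √ℓ := mul_nonneg (by linarith) (sqrt_nonneg ℓ)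
  have hcq : (ℓ - 1) * √ℓ ≤ (ℓ - 1) * √ℓ * q := le_mul_of_one_le_right hc hq
  rw [abs_le] at hT ⊢
  constructor <;> nlinarith

theorem tendsto_phiQ_one_div (hℓ : 1 ≤ ℓ) (hρ : 1 / 2 ≤ ρ)
    (hT : ∀ q : ℝ, 1 ≤ q → |T q| ≤ 4 * √q) :
    Tendsto (fun q => phiQ ℓ ρ T q 1 / q ^ (2 * ρ + 1 / 2)) atTop (𝓝 2) := by
  have hrem : Tendsto (fun q => (q + 1 - T q - ⌊2 * √q⌋ - (ℓ - 1) * √ℓ) / q ^ (2 * ρ + 1 / 2))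
      atTop (𝓝 0) := by
    refine tendsto_div_rpow_atTop_of_abs_le (C := 8 + (ℓ - 1) * √ℓ) (a := 1) (by linarith) ?_
    filter_upwards [eventually_ge_atTop 1] with q hq
    simpa using abs_phiQ_one_remainder_le hℓ hq (hT q hq)
  have hlin : Tendsto (fun q => (ℓ - 1) * q ^ ρ / q ^ (2 * ρ + 1 / 2)) atTop (𝓝 0) := by
    refine tendsto_div_rpow_atTop_of_abs_le (C := ℓ - 1) (a := ρ) (by linarith) ?_
    filter_upwards [eventually_ge_atTop 0] with q hq
    rw [abs_of_nonneg (by have := rpow_nonneg hq ρ; nlinarith)]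
  have hsum := (tendsto_floor_two_sqrt_div_sqrt.add hrem).add hlin
  rw [add_zero, add_zero] at hsum
  refine hsum.congr' ?_
  filter_upwards [eventually_gt_atTop 0] with q hq
  have hs := sqrt_pos.2 hq
  rw [phiQ_one (by linarith), add_div, add_div, rpow_two_mul_add_half hq]
  congr 2
  field_simp

theorem phiQ_le (hℓ : 1 ≤ ℓ) (hρ : 0 ≤ ρ) (hq : 1 ≤ q) (hT : |T q| ≤ 4 * √q) {x : ℝ}
    (hx : 0 ≤ x) (hy₀ : 0 ≤ q ^ ρ - x * √ℓ) (hy₁ : q ^ ρ - x * √ℓ ≤ √ℓ) :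
    phiQ ℓ ρ T q x ≤ q ^ ρ * q + (9 * ℓ + 2) * q ^ ρ * √q := by
  set h := q ^ ρ
  set y := h - x * √ℓ
  have hm₀ : (0 : ℝ) ≤ ⌊2 * √q⌋ := by exact_mod_cast Int.floor_nonneg.2 (by positivity)
  set m : ℝ := (⌊2 * √q⌋ : ℝ)
  have hsℓ : 1 ≤ √ℓ := one_le_sqrt.2 hℓ
  have hsq : 1 ≤ √q := one_le_sqrt.2 hq
  have hh : 1 ≤ h := one_le_rpow hq hρ
  have hm : m ≤ 2 * √q := Int.floor_le _
  have hxh : x ≤ h := by nlinarith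
  have hy2 : y ^ 2 ≤ ℓ := by
    calc y ^ 2 ≤ √ℓ ^ 2 := pow_le_pow_left₀ hy₀ hy₁ 2
      _ = ℓ := sq_sqrt (by linarith)
  have hquad : m * y ^ 2 ≤ 2 * √q * ℓ :=
    mul_le_mul hm hy2 (sq_nonneg y) (by positivity)
  have hlin : 2 * m * √ℓ * y ≤ 4 * √q * ℓ := by
    have : m * y ≤ 2 * √q * √ℓ := mul_le_mul hm hy₁ hy₀ (by positivity)
    nlinarith [sq_sqrt (show 0 ≤ ℓ by linarith)]
  have hc : q + 1 - T q + (ℓ - 1) * (m - √ℓ) ≤ q + (2 * ℓ + 3) * √q := by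
    have := (abs_le.1 hT).1
    nlinarith
  have hxc : x * (q + 1 - T q + (ℓ - 1) * (m - √ℓ)) ≤ h * (q + (2 * ℓ + 3) * √q) :=
    (mul_le_mul_of_nonneg_left hc hx).trans
      (mul_le_mul_of_nonneg_right hxh (by positivity))
  have hconst : h * (ℓ - 1) + 6 * ℓ * √q ≤ (7 * ℓ - 1) * h * √q := by
    nlinarith [mul_le_mul_of_nonneg_left hsq (by nlinarith : 0 ≤ h * (ℓ - 1)),
      mul_le_mul_of_nonneg_right hh (by positivity : 0 ≤ 6 * ℓ * √q)]
  unfold phiQ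
  nlinarith

theorem phiQ_floor_div_le (hℓ : 1 ≤ ℓ) (hρ : 1 / 2 ≤ ρ) (hq : 1 ≤ q) (hT : |T q| ≤ 4 * √q) :
    phiQ ℓ ρ T q ⌊q ^ ρ / √ℓ⌋ / q ^ (2 * ρ + 1 / 2) ≤ 1 + (9 * ℓ + 2) * q ^ (-ρ) := by
  have hq₀ : 0 < q := by linarith
  have hsℓ : 0 < √ℓ := sqrt_pos.2 (by linarith)
  have hh : 1 ≤ q ^ ρ := one_le_rpow hq (by linarith)
  have hfract : q ^ ρ - ⌊q ^ ρ / √ℓ⌋ * √ℓ = Int.fract (q ^ ρ / √ℓ) * √ℓ := by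
    rw [Int.fract, sub_mul, div_mul_cancel₀ _ hsℓ.ne']
  have hφ := phiQ_le hℓ (by linarith : 0 ≤ ρ) hq hT (x := ⌊q ^ ρ / √ℓ⌋)
    (by exact_mod_cast Int.floor_nonneg.2 (by positivity))
    (by rw [hfract]; exact mul_nonneg (Int.fract_nonneg _) hsℓ.le)
    (by rw [hfract]; exact mul_le_of_le_one_left hsℓ.le (Int.fract_lt_one _).le)
  have hsqh : √q ≤ q ^ ρ := by
    rw [sqrt_eq_rpow]; exact rpow_le_rpow_of_exponent_le hq hρ
  have hinv : q ^ (-ρ) * q ^ ρ = 1 := by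
    rw [rpow_neg hq₀.le, inv_mul_cancel₀ (by positivity)]
  have hexpand : (1 + (9 * ℓ + 2) * q ^ (-ρ)) * ((q ^ ρ) ^ 2 * √q)
      = q ^ ρ * (q ^ ρ * √q) + (9 * ℓ + 2) * q ^ ρ * √q := by
    linear_combination (9 * ℓ + 2) * q ^ ρ * √q * hinv
  rw [div_le_iff₀ (by positivity), rpow_two_mul_add_half hq₀, hexpand]
  nlinarith [mul_le_mul_of_nonneg_left hsqh (by positivity : 0 ≤ q ^ ρ * √q),
    mul_self_sqrt hq₀.le]

end

/-- Asymptotic analysis of Remark 3.5 for `ρ ≥ 1/2`: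
`M(q) / q^{2ρ+1/2} → 2` as `q → ∞`. -/
theorem stmt_11 (ℓ ρ : ℝ) (hℓ : 1 ≤ ℓ) (hρ : 1 / 2 ≤ ρ)
    (T : ℝ → ℝ) (hT : ∀ q : ℝ, 1 ≤ q → |T q| ≤ 4 * Real.sqrt q) :
    Filter.Tendsto (fun q : ℝ => MQ ℓ ρ T q / q ^ (2 * ρ + 1 / 2))
      Filter.atTop (nhds 2) := by
  have hφ₁ := tendsto_phiQ_one_div hℓ hρ hT
  have hfloor : Tendsto (fun q => ⌊q ^ ρ⌋ * (ℓ - 1) / q ^ (2 * ρ + 1 / 2)) atTop (𝓝 0) := by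
    refine tendsto_div_rpow_atTop_of_abs_le (C := ℓ - 1) (a := ρ) (by linarith) ?_
    filter_upwards [eventually_ge_atTop 0] with q hq
    have h₀ : (0 : ℝ) ≤ ⌊q ^ ρ⌋ := by exact_mod_cast Int.floor_nonneg.2 (rpow_nonneg hq ρ)
    rw [abs_of_nonneg (mul_nonneg h₀ (by linarith)), mul_comm]
    exact mul_le_mul_of_nonneg_left (Int.floor_le _) (by linarith)
  have hbound : Tendsto (fun q : ℝ => 1 + (9 * ℓ + 2) * q ^ (-ρ)) atTop (𝓝 1) := by
    simpa using ((tendsto_rpow_neg_atTop (by linarith)).const_mul (9 * ℓ + 2)).const_add 1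
  have hfloor_lt := hfloor.eventually_lt hφ₁ two_pos
  have hbound_lt := hbound.eventually_lt hφ₁ one_lt_two
  refine hφ₁.congr' ?_
  filter_upwards [hfloor_lt, hbound_lt, eventually_ge_atTop 1] with q hfloor_lt hbound_lt hq
  have hφ₂_lt := (phiQ_floor_div_le hℓ hρ hq (hT q hq)).trans_lt hbound_lt
  rw [div_lt_div_iff_of_pos_right (by positivity)] at hfloor_lt hφ₂_lt
  rw [MQ, max_eq_right hfloor_lt.le, max_eq_left hφ₂_lt.le]
end

section
/- Fix a real number ρ with 0 < ρ < 1/2 and an integer ℓ ≥ 2, and let T : ℝ → ℝ be any function such that |T(q)| ≤ 4·√q for all q ≥ 1. For q ≥ 1 and a real parameter λ ≥ 1, set m(q) := ⌊2√q⌋, h(q) := q^ρ, c_λ(q) := q + 1 − T(q) + (λ − 1)·(m(q) − √λ), φ_{q,λ}(x) := m(q)·(h(q) − x·√λ)² + 2·m(q)·√λ·(h(q) − x·√λ) + x·c_λ(q) + h(q)·(λ − 1), and M_λ(q) := max(⌊h(q)⌋·(λ − 1), φ_{q,λ}(1), φ_{q,λ}(⌊h(q)/√λ⌋)). Then there exists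 Q such that M_ℓ(q) < M_1(q) for all q > Q. -/
open Filter Real in
private lemma ev_le (C : ℝ) {a b : ℝ} (hab : a < b) :
    ∀ᶠ q : ℝ in atTop, C * q ^ a ≤ 1/100 * q ^ b := by
  have h1 : Tendsto (fun q : ℝ => q ^ (b - a)) atTop atTop :=
    tendsto_rpow_atTop (by linarith)
  filter_upwards [h1.eventually_ge_atTop (100 * |C|), eventually_ge_atTop (1:ℝ)]
    with q hq hq1
  have hq0 : (0:ℝ) < q := lt_of_lt_of_le one_pos hq1
  have h2 : C * q ^ a ≤ |C| * q ^ a :=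
    mul_le_mul_of_nonneg_right (le_abs_self C) (Real.rpow_nonneg hq0.le a)
  have h3 : |C| * q ^ a ≤ 1/100 * q ^ (b - a) * q ^ a := by
    have : |C| ≤ 1/100 * q ^ (b - a) := by linarith
    exact mul_le_mul_of_nonneg_right this (Real.rpow_nonneg hq0.le a)
  have h4 : 1/100 * q ^ (b - a) * q ^ a = 1/100 * q ^ b := by
    rw [mul_assoc, ← Real.rpow_add hq0]
    ring_nf
  linarith

set_option maxHeartbeats 1000000 in
open Filter Real in
/-- Conclusion of Remark 3.5: for `0 < ρ < 1/2` and an integer `ℓ ≥ 2`, the bound obtained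
with `ℓ` is eventually strictly better than the one obtained with `1`. -/
theorem stmt_12 (ρ : ℝ) (hρ0 : 0 < ρ) (hρ : ρ < 1 / 2) (ℓ : ℕ) (hℓ : 2 ≤ ℓ)
    (T : ℝ → ℝ) (hT : ∀ q : ℝ, 1 ≤ q → |T q| ≤ 4 * Real.sqrt q) :
    ∃ Q : ℝ, ∀ q : ℝ, Q < q → MQ (ℓ : ℝ) ρ T q < MQ 1 ρ T q := by
  have hℓ2 : (2:ℝ) ≤ (ℓ:ℝ) := by exact_mod_cast hℓ
  set L := Real.sqrt (ℓ:ℝ) with hLdef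
  have hL0 : 0 ≤ L := Real.sqrt_nonneg _
  have hLsq : L ^ 2 = (ℓ:ℝ) := Real.sq_sqrt (by linarith)
  have hL14 : (1.41:ℝ) ≤ L := by nlinarith only [hLsq, hL0, hℓ2]
  have P0 : ∀ᶠ q : ℝ in atTop, ((ℓ:ℝ)+1)^2 ≤ q := eventually_ge_atTop _
  have Ph : ∀ᶠ q : ℝ in atTop, L + 1 ≤ q ^ ρ :=
    (tendsto_rpow_atTop hρ0).eventually_ge_atTop _
  have P1 := ev_le 1 (show (1:ℝ) < 1 + ρ by linarith)
  have P2 := ev_le 4 (show ρ + 1/2 < 1 + ρ by linarith)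
  have P3 := ev_le (ℓ:ℝ) (show ρ < 1 + ρ by linarith)
  have P4 := ev_le 2 (show 2*ρ + 1/2 < 1 + ρ by linarith)
  have P5 := ev_le (4*L) (show ρ + 1/2 < 1 + ρ by linarith)
  have P6 := ev_le 1 (show (0:ℝ) < 1 + ρ by linarith)
  have P7 := ev_le (4+2*(ℓ:ℝ)) (show (1/2:ℝ) < 1 + ρ by linarith)
  have P8 := ev_le (6*(ℓ:ℝ)) (show (1/2:ℝ) < 1 + ρ by linarith)
  have P11 := ev_le (4+2*(ℓ:ℝ)) (show ρ + 1/2 < 1 + ρ by linarith)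
  have key : ∀ᶠ q : ℝ in atTop, MQ (ℓ:ℝ) ρ T q < MQ 1 ρ T q := by
    filter_upwards [P0, Ph, P1, P2, P3, P4, P5, P6, P7, P8, P11,
      eventually_ge_atTop (100:ℝ)] with q hq0' hhL p1 p2 p3 p4 p5 p6 p7 p8 p11 h100
    have hq1 : (1:ℝ) ≤ q := by linarith only [h100]
    have hq0 : (0:ℝ) < q := by linarith only [h100]
    set s := Real.sqrt q with hsdef
    set h := q ^ ρ with hhdef
    clear_value s h
    have hs0 : 0 ≤ s := by rw [hsdef]; exact Real.sqrt_nonneg q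
    have hssq : s ^ 2 = q := by rw [hsdef]; exact Real.sq_sqrt hq0.le
    have hs10 : (10:ℝ) ≤ s := by nlinarith only [hssq, hs0, h100]
    have hh1 : (1:ℝ) ≤ h := by rw [hhdef]; exact Real.one_le_rpow hq1 hρ0.le
    -- rpow rewrites
    have es : q ^ ((1:ℝ)/2) = s := by rw [hsdef, Real.sqrt_eq_rpow]
    have e1 : q ^ ((1:ℝ) + ρ) = q * h := by
      rw [Real.rpow_add hq0, Real.rpow_one, ← hhdef]
    have eρh : q ^ (ρ + 1/2 : ℝ) = h * s := by
      rw [Real.rpow_add hq0, es, ← hhdef]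
    have e2ρ : q ^ (2*ρ + 1/2 : ℝ) = h * h * s := by
      rw [Real.rpow_add hq0, two_mul, Real.rpow_add hq0, es, ← hhdef]
    rw [Real.rpow_one, e1] at p1
    rw [eρh, e1] at p2 p5 p11
    rw [e1] at p3
    rw [e2ρ, e1] at p4
    rw [Real.rpow_zero, e1] at p6
    rw [es, e1] at p7 p8
    have hA10' : h * 100 ≤ h * q :=
      mul_le_mul_of_nonneg_left h100 (by linarith only [hh1])
    have A10 : h ≤ 1/100 * (q * h) := by linarith only [hA10']
    -- floor facts
    have hm1 : ((⌊2*s⌋:ℤ):ℝ) ≤ 2*s := Int.floor_le _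
    have hm2 : 2*s - 1 < ((⌊2*s⌋:ℤ):ℝ) := Int.sub_one_lt_floor _
    have hm0 : (0:ℝ) ≤ ((⌊2*s⌋:ℤ):ℝ) := by linarith only [hm2, hs10]
    have hx0a : ((⌊h⌋:ℤ):ℝ) ≤ h := Int.floor_le _
    have hx0b : h - 1 < ((⌊h⌋:ℤ):ℝ) := Int.sub_one_lt_floor _
    have hL0' : (0:ℝ) < L := by linarith only [hL14]
    have hx1a : ((⌊h/L⌋:ℤ):ℝ) ≤ h/L := Int.floor_le _
    have hx1b : h/L - 1 < ((⌊h/L⌋:ℤ):ℝ) := Int.sub_one_lt_floor _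
    have hx1a' : ((⌊h/L⌋:ℤ):ℝ) * L ≤ h := (le_div_iff₀ hL0').mp hx1a
    have hx1b' : h < ((⌊h/L⌋:ℤ):ℝ) * L + L := by
      have h2 : h / L < ((⌊h/L⌋:ℤ):ℝ) + 1 := by linarith only [hx1b]
      have h3 := (div_lt_iff₀ hL0').mp h2
      linarith only [h3]
    have hx10 : (0:ℝ) ≤ ((⌊h/L⌋:ℤ):ℝ) := by
      have h1L : (1:ℝ) ≤ h / L := (one_le_div hL0').mpr (by linarith only [hhL])
      linarith only [h1L, hx1b]
    have hx1h : ((⌊h/L⌋:ℤ):ℝ) ≤ h := by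
      have H := mul_nonneg (show (0:ℝ) ≤ L - 1 by linarith only [hL14]) hx10
      linarith only [H, hx1a']
    obtain ⟨hT2, hT1⟩ := abs_le.mp (hT q hq1)
    rw [← hsdef] at hT1 hT2
    have hqh1 : (1:ℝ) ≤ q * h := by
      have H := mul_nonneg (show (0:ℝ) ≤ q - 1 by linarith only [hq1])
        (show (0:ℝ) ≤ h - 1 by linarith only [hh1])
      linarith only [H, hq1, hh1]
    -- upper bound for c_ℓ
    have hcc : q + 1 - T q + ((ℓ:ℝ) - 1) * (((⌊2*s⌋:ℤ):ℝ) - L) ≤ q + 1 + (4 + 2*(ℓ:ℝ)) * s := by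
      have H := mul_nonneg (show (0:ℝ) ≤ (ℓ:ℝ) - 1 by linarith only [hℓ2])
        (show (0:ℝ) ≤ 2*s - (((⌊2*s⌋:ℤ):ℝ) - L) by linarith only [hm1, hL0])
      linarith only [H, hT2, hs0, hℓ2]
    simp only [MQ, phiQ, Real.sqrt_one, div_one, mul_one, one_mul]
    rw [← hsdef, ← hhdef, ← hLdef]
    apply lt_of_le_of_lt (b := 0.9 * (q * h))
    · apply max_le (max_le ?_ ?_) ?_
      · -- ⌊h⌋ (ℓ − 1)
        have Hma : ((⌊h⌋:ℤ):ℝ) * ((ℓ:ℝ) - 1) ≤ h * ((ℓ:ℝ) - 1) :=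
          mul_le_mul_of_nonneg_right hx0a (by linarith only [hℓ2])
        linarith only [Hma, p3, hh1, hqh1]
      · -- φ_ℓ(1)
        have hb1 : ((⌊2*s⌋:ℤ):ℝ) * (h - L)^2 ≤ 2*s*(h*h) := by
          have H1 := mul_nonneg (show (0:ℝ) ≤ 2*s - ((⌊2*s⌋:ℤ):ℝ) by linarith only [hm1])
            (sq_nonneg (h - L))
          have H2 := mul_nonneg hs0 (mul_nonneg hL0
            (show (0:ℝ) ≤ 2*h - L by linarith only [hhL, hL0]))
          linarith only [H1, H2]
        have hb2 : 2 * ((⌊2*s⌋:ℤ):ℝ) * L * (h - L) ≤ 4*L*(h*s) := by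
          have H1 := mul_nonneg (mul_nonneg hL0
            (show (0:ℝ) ≤ 2*s - ((⌊2*s⌋:ℤ):ℝ) by linarith only [hm1]))
            (show (0:ℝ) ≤ h - L by linarith only [hhL])
          have H2 := mul_nonneg (mul_nonneg hs0 hL0) hL0
          linarith only [H1, H2]
        linarith only [hb1, hb2, hcc, p4, p5, p1, p6, p7, p3, hqh1, hh1]
      · -- φ_ℓ(x₁)
        have hd0 : (0:ℝ) ≤ h - ((⌊h/L⌋:ℤ):ℝ) * L := by linarith only [hx1a']
        have hdL : h - ((⌊h/L⌋:ℤ):ℝ) * L ≤ L := by linarith only [hx1b']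
        have hc1 : ((⌊2*s⌋:ℤ):ℝ) * (h - ((⌊h/L⌋:ℤ):ℝ) * L)^2 ≤ 2*(ℓ:ℝ)*s := by
          have H1 := mul_nonneg (show (0:ℝ) ≤ 2*s - ((⌊2*s⌋:ℤ):ℝ) by linarith only [hm1])
            (sq_nonneg (h - ((⌊h/L⌋:ℤ):ℝ) * L))
          have H2 := mul_nonneg (mul_nonneg hs0
            (show (0:ℝ) ≤ L - (h - ((⌊h/L⌋:ℤ):ℝ) * L) by linarith only [hdL]))
            (show (0:ℝ) ≤ L + (h - ((⌊h/L⌋:ℤ):ℝ) * L) by linarith only [hd0, hL0])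
          have hLs : s * L ^ 2 = s * (ℓ:ℝ) := by rw [hLsq]
          linarith only [H1, H2, hLs]
        have hc2 : 2 * ((⌊2*s⌋:ℤ):ℝ) * L * (h - ((⌊h/L⌋:ℤ):ℝ) * L) ≤ 4*(ℓ:ℝ)*s := by
          have H1 := mul_nonneg (mul_nonneg hL0
            (show (0:ℝ) ≤ 2*s - ((⌊2*s⌋:ℤ):ℝ) by linarith only [hm1])) hd0
          have H2 := mul_nonneg (mul_nonneg hL0 hs0)
            (show (0:ℝ) ≤ L - (h - ((⌊h/L⌋:ℤ):ℝ) * L) by linarith only [hdL])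
          have hLs : s * L ^ 2 = s * (ℓ:ℝ) := by rw [hLsq]
          linarith only [H1, H2, hLs]
        have hc3 : ((⌊h/L⌋:ℤ):ℝ) * (q + 1 - T q + ((ℓ:ℝ) - 1) * (((⌊2*s⌋:ℤ):ℝ) - L))
            ≤ ((⌊h/L⌋:ℤ):ℝ) * (q + 1 + (4 + 2*(ℓ:ℝ)) * s) :=
          mul_le_mul_of_nonneg_left hcc hx10
        have hc4 : ((⌊h/L⌋:ℤ):ℝ) * q ≤ 0.71 * (q * h) := by
          have h141 : 1.41 * ((⌊h/L⌋:ℤ):ℝ) ≤ h := by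
            have H := mul_nonneg (show (0:ℝ) ≤ L - 1.41 by linarith only [hL14]) hx10
            linarith only [H, hx1a']
          have Ha := mul_le_mul_of_nonneg_right h141 hq0.le
          have Hb := mul_nonneg hx10 hq0.le
          linarith only [Ha, Hb]
        have hc5 : ((⌊h/L⌋:ℤ):ℝ) * (1 + (4 + 2*(ℓ:ℝ)) * s) ≤ h + (4 + 2*(ℓ:ℝ)) * (h*s) := by
          have H := mul_le_mul_of_nonneg_right hx1h
            (show (0:ℝ) ≤ 1 + (4 + 2*(ℓ:ℝ)) * s by
              have := mul_nonneg (show (0:ℝ) ≤ 4 + 2*(ℓ:ℝ) by linarith only [hℓ2]) hs0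
              linarith only [this])
          linarith only [H]
        linarith only [hc1, hc2, hc3, hc4, hc5, p8, A10, p11, p3, hh1, hqh1]
    · apply lt_of_lt_of_le (b := 0.95 * (q * h))
      · linarith only [hqh1]
      · apply le_trans ?_ (le_max_right _ _)
        -- 0.95 q h ≤ φ₁(⌊h⌋)
        have hp1 : (0:ℝ) ≤ ((⌊2*s⌋:ℤ):ℝ) * (h - ((⌊h⌋:ℤ):ℝ))^2 :=
          mul_nonneg hm0 (sq_nonneg _)
        have hp2 : (0:ℝ) ≤ 2 * ((⌊2*s⌋:ℤ):ℝ) * (h - ((⌊h⌋:ℤ):ℝ)) := by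
          have H := mul_nonneg hm0 (show (0:ℝ) ≤ h - ((⌊h⌋:ℤ):ℝ) by linarith only [hx0a])
          linarith only [H]
        have hq4s : (0:ℝ) ≤ q + 1 - 4*s := by
          have H := mul_le_mul_of_nonneg_right hs10 hs0
          linarith only [H, hssq, hs10]
        have hp3 : (h - 1) * (q + 1 - 4*s) ≤ ((⌊h⌋:ℤ):ℝ) * (q + 1 - T q) :=
          mul_le_mul (by linarith only [hx0b]) (by linarith only [hT1]) hq4s
            (by linarith only [hx0b, hh1])
        linarith only [hp1, hp2, hp3, p1, p2, p6, hh1, hs0, hqh1]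
  obtain ⟨Q, hQ⟩ := eventually_atTop.mp key
  exact ⟨Q, fun q hq => hQ q hq.le⟩
end
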